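/- arXiv:2411.13672 — 7 statements merged into one kernel-verified Lean document; each statement's English description precedes it below -/
import Mathlib

section
/- Let (X,d,α) be a computable metric space. Then: (i) for every j ∈ ℕ, diam Ĵ_j ≤ fdiam(j); (ii) if K and U are subsets of X such that K is nonempty and compact, U is open and K ⊆ U, then for every ε > 0 there exists j ∈ ℕ such that K ⊆ J_j, Ĵ_j ⊆ U and fdiam(j) < diam K + ε. -/
open Metric Set

/-- A function `f : ℕ → ℚ` is computable if it is given by computable functions
`a, b, c : ℕ → ℕ` via the formula `f x = (-1)^(c x) * (a x) / ((b x) + 1)`. -/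
def QComputable (f : ℕ → ℚ) : Prop :=
  ∃ a b c : ℕ → ℕ, Computable a ∧ Computable b ∧ Computable c ∧
    ∀ x, f x = (-1 : ℚ) ^ c x * (a x : ℚ) / ((b x : ℚ) + 1)

/-- Computability of a function `ℕ³ → ℚ`. -/
def QComputable3 (f : ℕ → ℕ → ℕ → ℚ) : Prop :=
  ∃ a b c : ℕ → ℕ → ℕ → ℕ,
    Computable (fun p : ℕ × ℕ × ℕ => a p.1 p.2.1 p.2.2) ∧
    Computable (fun p : ℕ × ℕ × ℕ => b p.1 p.2.1 p.2.2) ∧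
    Computable (fun p : ℕ × ℕ × ℕ => c p.1 p.2.1 p.2.2) ∧
    ∀ x y z, f x y z = (-1 : ℚ) ^ c x y z * (a x y z : ℚ) / ((b x y z : ℚ) + 1)

/-- A function `f : ℕ² → ℝ` is computable if there is a computable `F : ℕ³ → ℚ`
with `|f x y - F x y i| < 2 ^ (-i)` for all `x, y, i`. -/
def RComputable2 (f : ℕ → ℕ → ℝ) : Prop :=
  ∃ F : ℕ → ℕ → ℕ → ℚ, QComputable3 F ∧
    ∀ x y i : ℕ, |f x y - (F x y i : ℝ)| < (2 : ℝ) ^ (-(i : ℤ))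

/-- A set is computably enumerable if it is the domain of a partial computable function. -/
def CEset {β : Type*} [Primcodable β] (A : Set β) : Prop :=
  ∃ f : β →. ℕ, Partrec f ∧ ∀ x, x ∈ A ↔ (f x).Dom

/-- A computable metric space structure on a metric space `X`: a dense sequence `alpha`
with computable mutual distances, together with the fixed computable enumeration
machinery: `tau1, tau2` (an enumeration of `ℕ²`), `q` (an enumeration of the positive
rationals) and `elem`/`bar` (an enumeration `j ↦ ((j)_0, …, (j)_{bar j})` of all
nonempty finite sequences in `ℕ`). -/
structure CMS (X : Type*) [MetricSpace X] where
  alpha : ℕ → X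
  dense_alpha : DenseRange alpha
  dist_comp : RComputable2 fun i j => dist (alpha i) (alpha j)
  tau1 : ℕ → ℕ
  tau2 : ℕ → ℕ
  tau1_comp : Computable tau1
  tau2_comp : Computable tau2
  tau_surj : ∀ m n : ℕ, ∃ i, tau1 i = m ∧ tau2 i = n
  q : ℕ → ℚ
  q_comp : QComputable q
  q_pos : ∀ i, 0 < q i
  q_surj : ∀ r : ℚ, 0 < r → ∃ i, q i = r
  elem : ℕ → ℕ → ℕ
  bar : ℕ → ℕ
  elem_comp : Computable₂ elem
  bar_comp : Computable bar
  seq_surj : ∀ L : List ℕ, L ≠ [] → ∃ j, (List.range (bar j + 1)).map (elem j) = L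

/-- `A ≈_ε B` : each point of `A` is within `ε` of a point of `B` and vice versa. -/
def CloseAppr {X : Type*} [MetricSpace X] (ε : ℝ) (A B : Set X) : Prop :=
  (∀ a ∈ A, ∃ b ∈ B, dist a b < ε) ∧ ∀ b ∈ B, ∃ a ∈ A, dist a b < ε

/-- Hausdorff distance `d_H(A,B) = inf {ε > 0 : A ≈_ε B}`. -/
noncomputable def hdist {X : Type*} [MetricSpace X] (A B : Set X) : ℝ :=
  sInf {ε : ℝ | 0 < ε ∧ CloseAppr ε A B}

namespace CMS

variable {X : Type*} [MetricSpace X] (M : CMS X)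

/-- `λ_i` -/
def lam (i : ℕ) : X := M.alpha (M.tau1 i)

/-- `ρ_i` -/
noncomputable def rho (i : ℕ) : ℝ := (M.q (M.tau2 i) : ℝ)

/-- `I_i`, the rational open ball `B(λ_i, ρ_i)`. -/
noncomputable def I (i : ℕ) : Set X := Metric.ball (M.lam i) (M.rho i)

/-- `Î_i`, the rational closed ball `B̂(λ_i, ρ_i)`. -/
noncomputable def Ihat (i : ℕ) : Set X := Metric.closedBall (M.lam i) (M.rho i)

/-- `[j] = {(j)_0, …, (j)_{bar j}}`. -/
def idx (j : ℕ) : Finset ℕ := (Finset.range (M.bar j + 1)).image (M.elem j)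

lemma idx_nonempty (j : ℕ) : (M.idx j).Nonempty :=
  Finset.nonempty_range_add_one.image _

/-- `J_j = ⋃_{i ∈ [j]} I_i`. -/
noncomputable def J (j : ℕ) : Set X := ⋃ i ∈ M.idx j, M.I i

/-- `Ĵ_j = ⋃_{i ∈ [j]} Î_i`. -/
noncomputable def Jhat (j : ℕ) : Set X := ⋃ i ∈ M.idx j, M.Ihat i

/-- A set `S ⊆ X` is semicomputable if `S ∩ B` is compact for each closed ball `B`
and `{(i,j) : Î_i ∩ S ⊆ J_j}` is c.e. -/
def Semicomputable (S : Set X) : Prop :=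
  (∀ (x : X) (r : ℝ), IsCompact (S ∩ Metric.closedBall x r)) ∧
    CEset {p : ℕ × ℕ | M.Ihat p.1 ∩ S ⊆ M.J p.2}

/-- A (closed) set `S` is c.e. if `{i : I_i ∩ S ≠ ∅}` is c.e. -/
def CEClosedSet (S : Set X) : Prop := CEset {i : ℕ | (M.I i ∩ S).Nonempty}

/-- A set is computable if it is semicomputable and c.e. -/
def ComputableSet (S : Set X) : Prop := M.Semicomputable S ∧ M.CEClosedSet S

/-- A point `x` is computable if there is a computable `f` with
`d(x, α (f k)) < 2^(-k)` for all `k`. -/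
def ComputablePoint (x : X) : Prop :=
  ∃ f : ℕ → ℕ, Computable f ∧ ∀ k : ℕ, dist x (M.alpha (f k)) < (2 : ℝ) ^ (-(k : ℤ))

/-- A compact set `S` is computable if `S = ∅` or there is a computable `f` with
`S ≈_{2^{-k}} {α i : i ∈ [f k]}` for all `k`. -/
def ComputableCompact (S : Set X) : Prop :=
  S = ∅ ∨ ∃ f : ℕ → ℕ, Computable f ∧
    ∀ k : ℕ, CloseAppr ((2 : ℝ) ^ (-(k : ℤ))) S (M.alpha '' ↑(M.idx (f k)))

/-- The formal diameter `fdiam j = diam {λ_u : u ∈ [j]} + 2 * max {ρ_u : u ∈ [j]}`. -/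
noncomputable def fdiam (j : ℕ) : ℝ :=
  Metric.diam (M.lam '' ↑(M.idx j)) + 2 * (M.idx j).sup' (M.idx_nonempty j) M.rho

/-- `I_i ◊ I_j` : formal disjointness of rational open balls. -/
def IDisj (i j : ℕ) : Prop := M.rho i + M.rho j < dist (M.lam i) (M.lam j)

/-- `J_i ◊ J_j` : formal disjointness of finite unions of rational balls. -/
def JDisj (i j : ℕ) : Prop := ∀ k ∈ M.idx i, ∀ l ∈ M.idx j, M.IDisj k l

/-- `I_i ⊑ I_j` : formal containment of rational open balls. -/
def ISubF (i j : ℕ) : Prop := dist (M.lam i) (M.lam j) + M.rho i < M.rho j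

/-- `J_i ⊑ J_j` : formal containment of finite unions of rational balls. -/
def JSubF (i j : ℕ) : Prop := ∀ k ∈ M.idx i, ∃ l ∈ M.idx j, M.ISubF k l

/-- `K ⊆_ε J_j` : `K ⊆ J_j`, every `I_i`, `i ∈ [j]`, meets `K`, and `ρ_i < ε` for `i ∈ [j]`. -/
def SubEps (K : Set X) (ε : ℝ) (j : ℕ) : Prop :=
  K ⊆ M.J j ∧ (∀ i ∈ M.idx j, (M.I i ∩ K).Nonempty) ∧ ∀ i ∈ M.idx j, M.rho i < ε

end CMS

/-- `(C 0, …, C n)` is a quasi-chain: nonempty links, and links meeting only if adjacent. -/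
def IsQuasiChainSeq {X : Type*} (C : ℕ → Set X) (n : ℕ) : Prop :=
  (∀ i ≤ n, (C i).Nonempty) ∧
    ∀ i ≤ n, ∀ j ≤ n, (C i ∩ C j).Nonempty → |(i : ℤ) - (j : ℤ)| ≤ 1

/-- `(C 0, …, C n)` is a chain: nonempty links, meeting iff adjacent. -/
def IsChainSeq {X : Type*} (C : ℕ → Set X) (n : ℕ) : Prop :=
  (∀ i ≤ n, (C i).Nonempty) ∧
    ∀ i ≤ n, ∀ j ≤ n, ((C i ∩ C j).Nonempty ↔ |(i : ℤ) - (j : ℤ)| ≤ 1)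

/-- `(D 0, …, D m)` refines `(C 0, …, C n)`. -/
def SeqRefines {X : Type*} (D : ℕ → Set X) (m : ℕ) (C : ℕ → Set X) (n : ℕ) : Prop :=
  ∀ i ≤ m, ∃ j ≤ n, D i ⊆ C j

/-- `(D 0, …, D m)` strongly refines `(C 0, …, C n)`. -/
def SeqStronglyRefines {X : Type*} (D : ℕ → Set X) (m : ℕ) (C : ℕ → Set X) (n : ℕ) : Prop :=
  SeqRefines D m C n ∧ D 0 ⊆ C 0 ∧ D m ⊆ C n

/-- `mesh (C 0, …, C n) = max_i diam (C i)`. -/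
noncomputable def meshSeq {X : Type*} [MetricSpace X] (C : ℕ → Set X) (n : ℕ) : ℝ :=
  (Finset.range (n + 1)).sup' Finset.nonempty_range_add_one fun i => Metric.diam (C i)

/-- `S` is chainable from `a` to `b`: for every `ε > 0` there is an open `ε`-chain in `S`
covering `S` whose first link contains `a` and last link contains `b`. -/
def ChainableFromTo {X : Type*} [MetricSpace X] (S : Set X) (a b : X) : Prop :=
  ∀ ε : ℝ, 0 < ε → ∃ (m : ℕ) (U : ℕ → Set X),
    (∀ i ≤ m, ∃ V : Set X, IsOpen V ∧ U i = V ∩ S) ∧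
    IsChainSeq U m ∧ meshSeq U m < ε ∧ (S ⊆ ⋃ i ∈ Finset.range (m + 1), U i) ∧
    a ∈ U 0 ∧ b ∈ U m

/-- A nondegenerate line segment in `ℝ^n`. -/
def IsLineSegmentPiece {n : ℕ} (I : Set (Fin n → ℝ)) : Prop :=
  ∃ a b : Fin n → ℝ, a ≠ b ∧ I = segment ℝ a b

/-- A ray `{a + t • v : t ∈ [0,∞)}` in `ℝ^n`. -/
def IsRayPiece {n : ℕ} (I : Set (Fin n → ℝ)) : Prop :=
  ∃ a v : Fin n → ℝ, v ≠ 0 ∧ I = {x | ∃ t : ℝ, 0 ≤ t ∧ x = a + t • v}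

/-- `a` is an endpoint of the line segment or ray `I`. -/
def IsPieceEndpoint {n : ℕ} (a : Fin n → ℝ) (I : Set (Fin n → ℝ)) : Prop :=
  (∃ b : Fin n → ℝ, b ≠ a ∧ I = segment ℝ a b) ∨
    (∃ v : Fin n → ℝ, v ≠ 0 ∧ I = {x | ∃ t : ℝ, 0 ≤ t ∧ x = a + t • v})

/-- A nonempty finite family of line segments and rays in `ℝ^n` such that two distinct
intersecting members meet in exactly one point, an endpoint of both. -/
def GoodPieceFamily {n : ℕ} (K : Finset (Set (Fin n → ℝ))) : Prop :=
  K.Nonempty ∧ (∀ I ∈ K, IsLineSegmentPiece I ∨ IsRayPiece I) ∧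
    ∀ I ∈ K, ∀ J ∈ K, I ≠ J → (I ∩ J).Nonempty →
      ∃ a, I ∩ J = {a} ∧ IsPieceEndpoint a I ∧ IsPieceEndpoint a J

/-- `S`, as a subspace, is a (topological) graph. -/
def IsGraphSet {X : Type*} [TopologicalSpace X] (S : Set X) : Prop :=
  ∃ (n : ℕ) (K : Finset (Set (Fin (n + 1) → ℝ))), GoodPieceFamily K ∧
    Nonempty (S ≃ₜ (⋃ I ∈ K, I : Set (Fin (n + 1) → ℝ)))

/-- `x` is an endpoint of the graph `S`: it has an open neighbourhood in `S`
homeomorphic to `[0,∞)` by a homeomorphism sending `x` to `0`. -/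
def IsGraphEndpoint {X : Type*} [TopologicalSpace X] (S : Set X) (x : X) : Prop :=
  x ∈ S ∧ ∃ (N : Set X) (hx : x ∈ N), N ⊆ S ∧ (∃ V, IsOpen V ∧ N = V ∩ S) ∧
    ∃ h : N ≃ₜ Set.Ici (0 : ℝ), (h ⟨x, hx⟩ : ℝ) = 0

/-- An arc: a space homeomorphic to `[0,1]`. -/
def IsArc {X : Type*} [TopologicalSpace X] (A : Set X) : Prop :=
  Nonempty (A ≃ₜ Set.Icc (0 : ℝ) 1)

/-- A topological ray: a space homeomorphic to `[0,∞)`. -/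
def IsTopRay {X : Type*} [TopologicalSpace X] (A : Set X) : Prop :=
  Nonempty (A ≃ₜ Set.Ici (0 : ℝ))

/-- `x` is an endpoint of the arc (or topological ray) `A`: `A \ {x}` is connected. -/
def IsArcEndpoint {X : Type*} [TopologicalSpace X] (A : Set X) (x : X) : Prop :=
  x ∈ A ∧ IsConnected (A \ {x})

/-- `B = [x,y]_A`, the unique subspace of `A` which is an arc with endpoints `x` and `y`. -/
def IsSubarc {X : Type*} [TopologicalSpace X] (A : Set X) (x y : X) (B : Set X) : Prop :=
  B ⊆ A ∧ x ≠ y ∧ IsArc B ∧ IsArcEndpoint B x ∧ IsArcEndpoint B y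

/-- The family of arcs `A 0, …, A n` defines the compact graph `S`. -/
def ArcsDefine {X : Type*} [TopologicalSpace X] {n : ℕ} (A : Fin (n + 1) → Set X)
    (S : Set X) : Prop :=
  (∀ i, IsArc (A i)) ∧ S = ⋃ i, A i ∧
    ∀ i j, A i ≠ A j → (A i ∩ A j).Nonempty →
      ∃ a, A i ∩ A j = {a} ∧ IsArcEndpoint (A i) a ∧ IsArcEndpoint (A j) a

/-- The family of arcs and topological rays `A 0, …, A n` (closed in `S`) defines the
graph `S`. -/
def ArcsRaysDefine {X : Type*} [TopologicalSpace X] {n : ℕ} (A : Fin (n + 1) → Set X)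
    (S : Set X) : Prop :=
  (∀ i, IsArc (A i) ∨ IsTopRay (A i)) ∧ S = ⋃ i, A i ∧
    (∀ i, ∃ C : Set X, IsClosed C ∧ A i = C ∩ S) ∧
    ∀ i j, A i ≠ A j → (A i ∩ A j).Nonempty →
      ∃ a, A i ∩ A j = {a} ∧ IsArcEndpoint (A i) a ∧ IsArcEndpoint (A j) a

/-- `Γ`: the set of endpoints of the graph `S` which are not computable points. -/
def CMS.UncompEndpoints {X : Type*} [MetricSpace X] (M : CMS X) (S : Set X) : Set X :=
  {x | IsGraphEndpoint S x ∧ ¬ M.ComputablePoint x}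

/-- `S`, as a subspace, is a 1-manifold with boundary: every point has an open
neighbourhood homeomorphic to `ℝ` or to `[0,∞)` (subspaces of a separable metric
space being automatically second-countable and Hausdorff). -/
def Is1ManifoldWithBoundary {X : Type*} [TopologicalSpace X] (S : Set X) : Prop :=
  ∀ x ∈ S, ∃ N : Set X, x ∈ N ∧ N ⊆ S ∧ (∃ V, IsOpen V ∧ N = V ∩ S) ∧
    (Nonempty (N ≃ₜ ℝ) ∨ Nonempty (N ≃ₜ Set.Ici (0 : ℝ)))

/-- The boundary `∂S` of a 1-manifold with boundary `S`: points having a neighbourhood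
in `S` homeomorphic to `[0,∞)` by a homeomorphism sending the point to `0`. -/
def ManifoldBoundary {X : Type*} [TopologicalSpace X] (S : Set X) : Set X :=
  {x | x ∈ S ∧ ∃ (N : Set X) (hx : x ∈ N), N ⊆ S ∧ (∃ V, IsOpen V ∧ x ∈ V ∧ V ∩ S ⊆ N) ∧
    ∃ h : N ≃ₜ Set.Ici (0 : ℝ), (h ⟨x, hx⟩ : ℝ) = 0}
/-- (i) `diam Ĵ_j ≤ fdiam j`; (ii) a nonempty compact `K` inside an
open `U` is contained in some `J_j` with `Ĵ_j ⊆ U` and `fdiam j < diam K + ε`. -/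
theorem fdiam_properties {X : Type*} [MetricSpace X] (M : CMS X) :
    (∀ j : ℕ, Metric.diam (M.Jhat j) ≤ M.fdiam j) ∧
      ∀ K U : Set X, K.Nonempty → IsCompact K → IsOpen U → K ⊆ U →
        ∀ ε : ℝ, 0 < ε →
          ∃ j : ℕ, K ⊆ M.J j ∧ M.Jhat j ⊆ U ∧ M.fdiam j < Metric.diam K + ε := by
  constructor
  · -- Part (i)
    intro j
    have hne := M.idx_nonempty j
    have hsup : ∀ u ∈ M.idx j, M.rho u ≤ (M.idx j).sup' hne M.rho :=
      fun u hu => Finset.le_sup' _ hu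
    have hbd : Bornology.IsBounded (M.lam '' ↑(M.idx j)) := (Set.toFinite _).isBounded
    apply Metric.diam_le_of_forall_dist_le
    · obtain ⟨u, hu⟩ := hne
      have h1 : (0:ℝ) < M.rho u := by
        have : (0:ℝ) < (M.q (M.tau2 u) : ℝ) := by exact_mod_cast M.q_pos (M.tau2 u)
        simpa [CMS.rho] using this
      have h2 := hsup u hu
      have h3 : (0:ℝ) ≤ Metric.diam (M.lam '' ↑(M.idx j)) := Metric.diam_nonneg
      unfold CMS.fdiam
      linarith
    · intro x hx y hy
      rw [CMS.Jhat, Set.mem_iUnion₂] at hx hy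
      obtain ⟨u, hu, hxu⟩ := hx
      obtain ⟨v, hv, hyv⟩ := hy
      have hxu' : dist x (M.lam u) ≤ M.rho u := Metric.mem_closedBall.1 hxu
      have hyv' : dist (M.lam v) y ≤ M.rho v := by
        rw [dist_comm]; exact Metric.mem_closedBall.1 hyv
      have huv : dist (M.lam u) (M.lam v) ≤ Metric.diam (M.lam '' ↑(M.idx j)) :=
        Metric.dist_le_diam_of_mem hbd ⟨u, by simpa using hu, rfl⟩ ⟨v, by simpa using hv, rfl⟩
      have htri := dist_triangle4 x (M.lam u) (M.lam v) y
      have h1 := hsup u hu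
      have h2 := hsup v hv
      unfold CMS.fdiam
      linarith
  · -- Part (ii)
    intro K U hKne hK hU hKU ε hε
    obtain ⟨δ₀, hδ₀, hth⟩ := hK.exists_thickening_subset_open hU hKU
    set δ : ℝ := min (δ₀ / 2) (ε / 4) with hδdef
    have hδpos : 0 < δ := lt_min (by linarith) (by linarith)
    have hδ1 : δ ≤ δ₀ / 2 := min_le_left _ _
    have hδ2 : δ ≤ ε / 4 := min_le_right _ _
    have key : ∀ x ∈ K, ∃ i : ℕ,
        dist x (M.lam i) < δ / 2 ∧ δ / 2 < M.rho i ∧ M.rho i < δ := by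
      intro x hx
      obtain ⟨m, hm⟩ := Metric.denseRange_iff.1 M.dense_alpha x (δ / 2) (by linarith)
      obtain ⟨r, hr1, hr2⟩ := exists_rat_btwn (show δ / 2 < δ by linarith)
      have hrpos : (0:ℚ) < r := by
        have : (0:ℝ) < (r:ℝ) := lt_trans (by linarith) hr1
        exact_mod_cast this
      obtain ⟨n, hn⟩ := M.q_surj r hrpos
      obtain ⟨i, hi1, hi2⟩ := M.tau_surj m n
      refine ⟨i, ?_, ?_, ?_⟩
      · simpa [CMS.lam, hi1] using hm
      · simpa [CMS.rho, hi2, hn] using hr1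
      · simpa [CMS.rho, hi2, hn] using hr2
    choose! f hf1 hf2 hf3 using key
    have hmem : ∀ x ∈ K, x ∈ M.I (f x) := fun x hx =>
      Metric.mem_ball.2 (lt_trans (hf1 x hx) (hf2 x hx))
    obtain ⟨t, htK, hcov⟩ := hK.elim_nhds_subcover (fun x => M.I (f x)) fun x hx =>
      Metric.isOpen_ball.mem_nhds (hmem x hx)
    have htne : t.Nonempty := by
      obtain ⟨x0, hx0⟩ := hKne
      obtain ⟨x, hx, -⟩ := Set.mem_iUnion₂.1 (hcov hx0)
      exact ⟨x, hx⟩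
    have hLne : t.toList.map f ≠ [] := by
      simp [Finset.toList_eq_nil, htne.ne_empty]
    obtain ⟨j, hj⟩ := M.seq_surj (t.toList.map f) hLne
    have hidx : M.idx j = t.image f := by
      ext i
      have h1 : i ∈ (List.range (M.bar j + 1)).map (M.elem j) ↔ i ∈ t.toList.map f := by
        rw [hj]
      simpa [CMS.idx, List.mem_map, List.mem_range, Finset.mem_image,
        Finset.mem_range, Finset.mem_toList] using h1
    have hmemidx : ∀ i ∈ M.idx j, ∃ x ∈ t, f x = i := by
      intro i hi
      rw [hidx] at hi
      exact Finset.mem_image.1 hi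
    refine ⟨j, ?_, ?_, ?_⟩
    · -- K ⊆ J j
      intro y hy
      obtain ⟨x, hx, hyI⟩ := Set.mem_iUnion₂.1 (hcov hy)
      refine Set.mem_iUnion₂.2 ⟨f x, ?_, hyI⟩
      rw [hidx]
      exact Finset.mem_image_of_mem f hx
    · -- Jhat j ⊆ U
      intro y hy
      obtain ⟨i, hi, hyI⟩ := Set.mem_iUnion₂.1 hy
      obtain ⟨x, hxt, rfl⟩ := hmemidx i hi
      have hxK : x ∈ K := htK x hxt
      have h1 : dist y (M.lam (f x)) ≤ M.rho (f x) := Metric.mem_closedBall.1 hyI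
      have h2 := hf1 x hxK
      have h3 := hf3 x hxK
      have hdyx : dist y x < δ₀ := by
        have := dist_triangle y (M.lam (f x)) x
        rw [dist_comm (M.lam (f x)) x] at this
        linarith
      exact hth (Metric.mem_thickening_iff.2 ⟨x, hxK, hdyx⟩)
    · -- fdiam bound
      have hbdK := hK.isBounded
      have hdK : (0:ℝ) ≤ Metric.diam K := Metric.diam_nonneg
      have hd1 : Metric.diam (M.lam '' ↑(M.idx j)) ≤ Metric.diam K + δ := by
        apply Metric.diam_le_of_forall_dist_le (by linarith)
        rintro p ⟨u, hu, rfl⟩ q ⟨v, hv, rfl⟩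
        obtain ⟨x, hxt, rfl⟩ := hmemidx u hu
        obtain ⟨x', hx't, rfl⟩ := hmemidx v hv
        have hxK : x ∈ K := htK x hxt
        have hx'K : x' ∈ K := htK x' hx't
        have h1 := hf1 x hxK
        have h2 := hf1 x' hx'K
        have h3 : dist x x' ≤ Metric.diam K := Metric.dist_le_diam_of_mem hbdK hxK hx'K
        have h4 := dist_triangle4 (M.lam (f x)) x x' (M.lam (f x'))
        rw [dist_comm (M.lam (f x)) x] at h4
        linarith
      have hd2 : (M.idx j).sup' (M.idx_nonempty j) M.rho < δ := by
        rw [Finset.sup'_lt_iff]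
        intro i hi
        obtain ⟨x, hxt, rfl⟩ := hmemidx i hi
        exact hf3 x (htK x hxt)
      unfold CMS.fdiam
      linarith
end

section
/- Let (X,d,α) be a computable metric space and let S be a semicomputable set in this space (not necessarily compact). Let m ∈ ℕ. Then S \ J_m is a semicomputable set. -/
open Metric Set

section Aux

lemma computable_rangeMap {α : Type*} [Primcodable α] {k : α → ℕ} {g : α → ℕ → ℕ}
    (hk : Computable k) (hg : Computable₂ g) :
    Computable fun a => (List.range (k a)).map (g a) := by
  have h : Computable fun a => Nat.rec (motive := fun _ => List ℕ) ([] : List ℕ)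
      (fun y IH => IH ++ [g a y]) (k a) :=
    Computable.nat_rec hk (Computable.const ([] : List ℕ))
      ((Computable.list_concat.comp (Computable.snd.comp Computable.snd)
        (hg.comp Computable.fst (Computable.fst.comp Computable.snd))).to₂)
  refine h.of_eq fun a => ?_
  induction k a with
  | zero => rfl
  | succ n ih => simp [List.range_succ, ih]

end Aux

/-- If `S` is semicomputable then so is `S \ J_m`. -/
theorem semicomputable_sdiff_J {X : Type*} [MetricSpace X] (M : CMS X)
    (S : Set X) (hS : M.Semicomputable S) (m : ℕ) :
    M.Semicomputable (S \ M.J m) := by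
  obtain ⟨hcomp, f, hf, hdom⟩ := hS
  have hJopen : ∀ k, IsOpen (M.J k) := fun k =>
    isOpen_biUnion fun i _ => Metric.isOpen_ball
  constructor
  · intro x r
    have he : (S \ M.J m) ∩ Metric.closedBall x r
        = (S ∩ Metric.closedBall x r) ∩ (M.J m)ᶜ := by
      ext y
      simp only [Set.mem_inter_iff, Set.mem_diff, Set.mem_compl_iff]
      tauto
    rw [he]
    exact (hcomp x r).inter_right (hJopen m).isClosed_compl
  · -- the list coded by `k`
    set A : ℕ → List ℕ := fun k => (List.range (M.bar k + 1)).map (M.elem k) with hAdef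
    have hA : Computable A :=
      computable_rangeMap (Computable.succ.comp M.bar_comp) M.elem_comp
    set L : ℕ → List ℕ := fun j => A j ++ A m with hLdef
    have hL : Computable L :=
      Computable.list_append.comp hA (Computable.const (A m))
    -- idx via lists
    have hidxA : ∀ k, M.idx k = (A k).toFinset := by
      intro k
      ext x
      simp [CMS.idx, hAdef, List.mem_map]
    -- the search for a code of `L j`
    set g : ℕ →. ℕ := fun j => Nat.rfind fun n =>
      Part.some (decide (A n = L j)) with hgdef
    have hg : Partrec g := by
      apply Partrec.rfind
      exact Computable₂.partrec₂
        ((Primrec.eq.decide.to_comp.comp (hA.comp Computable.snd) (hL.comp Computable.fst)).to₂)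
    have hgdom : ∀ j, (g j).Dom := by
      intro j
      obtain ⟨n, hn⟩ := M.seq_surj (L j) (by
        intro h
        exact absurd (congrArg List.length h) (by simp [hLdef, hAdef]))
      rw [hgdef]
      refine Nat.rfind_dom.2 ?_
      refine ⟨n, ?_, fun {_} _ => trivial⟩
      simp [hAdef, hn]
    -- the found code denotes `J j ∪ J m`
    have hJg : ∀ j, M.J ((g j).get (hgdom j)) = M.J j ∪ M.J m := by
      intro j
      have hmem : (g j).get (hgdom j) ∈ g j := Part.get_mem _
      have hspec := Nat.rfind_spec hmem
      have heq : A ((g j).get (hgdom j)) = L j := by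
        simpa using hspec
      have hidx : M.idx ((g j).get (hgdom j)) = M.idx j ∪ M.idx m := by
        rw [hidxA, hidxA, hidxA, heq]
        show (A j ++ A m).toFinset = _
        simp [List.toFinset_append]
      simp only [CMS.J, hidx]
      exact Finset.set_biUnion_union _ _ _
    -- the final partial function
    refine ⟨fun p => (g p.2).bind fun n => f (p.1, n), ?_, ?_⟩
    · exact (hg.comp Computable.snd).bind
        (hf.comp (((Computable.fst.comp Computable.fst).pair Computable.snd)))
    · rintro ⟨i, j⟩
      rw [Part.bind_dom]
      constructor
      · intro hsub
        refine ⟨hgdom j, ?_⟩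
        rw [← hdom (i, (g j).get (hgdom j))]
        intro x hx
        show x ∈ M.J _
        rw [hJg j]
        by_cases hxm : x ∈ M.J m
        · exact Or.inr hxm
        · exact Or.inl (hsub ⟨hx.1, hx.2, hxm⟩)
      · rintro ⟨h1, h2⟩
        have h3 : M.Ihat i ∩ S ⊆ M.J ((g j).get h1) := (hdom _).2 h2
        rw [hJg j] at h3
        rintro x ⟨hxi, hxS, hxm⟩
        rcases h3 ⟨hxi, hxS⟩ with h | h
        · exact h
        · exact absurd h hxm
end

section
/- Let (X,d,α) be a computable metric space, let S be a semicomputable set in this space and let K and U be subsets of S such that K is compact, U is open in S (in the subspace topology) and K ⊆ U. Then there exists a semicomputable compact set S' ⊆ S such that K ⊆ S' ⊆ U. -/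
open Metric Set

namespace SCAux

/-- Bounded exists: `exB g n = true ↔ ∃ k < n, g k = true`. -/
def exB (g : ℕ → Bool) : ℕ → Bool := fun n => n.rec false (fun m ih => ih || g m)

/-- Bounded forall. -/
def allB (g : ℕ → Bool) : ℕ → Bool := fun n => n.rec true (fun m ih => ih && g m)

lemma exB_iff {g : ℕ → Bool} {n : ℕ} : exB g n = true ↔ ∃ k < n, g k = true := by
  induction n with
  | zero => simp [exB]
  | succ m ih =>
    have h : exB g (m+1) = (exB g m || g m) := rfl
    rw [h, Bool.or_eq_true, ih]
    constructor
    · rintro (⟨k, hk, hh⟩ | hh)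
      · exact ⟨k, Nat.lt_succ_of_lt hk, hh⟩
      · exact ⟨m, Nat.lt_succ_self m, hh⟩
    · rintro ⟨k, hk, hh⟩
      rcases Nat.lt_succ_iff_lt_or_eq.1 hk with h' | rfl
      · exact Or.inl ⟨k, h', hh⟩
      · exact Or.inr hh

lemma allB_iff {g : ℕ → Bool} {n : ℕ} : allB g n = true ↔ ∀ k < n, g k = true := by
  induction n with
  | zero => simp [allB]
  | succ m ih =>
    have h : allB g (m+1) = (allB g m && g m) := rfl
    rw [h, Bool.and_eq_true, ih]
    constructor
    · rintro ⟨h1, h2⟩ k hk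
      rcases Nat.lt_succ_iff_lt_or_eq.1 hk with h' | rfl
      · exact h1 k h'
      · exact h2
    · intro hh
      exact ⟨fun k hk => hh k (Nat.lt_succ_of_lt hk), hh m (Nat.lt_succ_self m)⟩

lemma exB_computable {α} [Primcodable α] {g : α → ℕ → Bool} {h : α → ℕ}
    (hg : Computable₂ g) (hh : Computable h) : Computable fun a => exB (g a) (h a) :=
  Computable.nat_rec hh (Computable.const false)
    ((Primrec.or.to_comp.comp (Computable.snd.comp Computable.snd)
      (hg.comp Computable.fst (Computable.fst.comp Computable.snd)) : Computable
        fun x : α × (ℕ × Bool) => x.2.2 || g x.1 x.2.1).to₂)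

lemma allB_computable {α} [Primcodable α] {g : α → ℕ → Bool} {h : α → ℕ}
    (hg : Computable₂ g) (hh : Computable h) : Computable fun a => allB (g a) (h a) :=
  Computable.nat_rec hh (Computable.const true)
    ((Primrec.and.to_comp.comp (Computable.snd.comp Computable.snd)
      (hg.comp Computable.fst (Computable.fst.comp Computable.snd)) : Computable
        fun x : α × (ℕ × Bool) => x.2.2 && g x.1 x.2.1).to₂)

end SCAux
namespace SCAux

/-- Decides `(-1)^C * A/(B+1) + 2^(-k) + P/(Q+1) ≤ R/(T+1)` over `ℚ`. -/
def isubTest (A B C P Q R T k : ℕ) : Bool :=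
  if C % 2 = 0 then
    decide (A*2^k*(Q+1)*(T+1) + (B+1)*(Q+1)*(T+1) + P*2^k*(B+1)*(T+1) ≤ R*2^k*(B+1)*(Q+1))
  else
    decide ((B+1)*(Q+1)*(T+1) + P*2^k*(B+1)*(T+1) ≤ R*2^k*(B+1)*(Q+1) + A*2^k*(Q+1)*(T+1))

/-- Decides `P/(Q+1) + R/(T+1) + 2^(-k) ≤ (-1)^C * A/(B+1)` over `ℚ`. -/
def idisjTest (A B C P Q R T k : ℕ) : Bool :=
  if C % 2 = 0 then
    decide (P*2^k*(B+1)*(T+1) + R*2^k*(B+1)*(Q+1) + (B+1)*(Q+1)*(T+1) ≤ A*2^k*(Q+1)*(T+1))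
  else false

lemma key_iff (s : ℚ) (A B P Q R T k : ℕ) :
    (s * A/(B+1) + (2:ℚ)^(-(k:ℤ)) + P/(Q+1) ≤ R/(T+1)) ↔
      s*A*2^k*(Q+1)*(T+1) + ((B:ℚ)+1)*(Q+1)*(T+1) + P*2^k*(B+1)*(T+1)
        ≤ (R:ℚ)*2^k*(B+1)*(Q+1) := by
  have hD : (0:ℚ) < 2^k*((B:ℚ)+1)*((Q:ℚ)+1)*((T:ℚ)+1) := by positivity
  have hB : ((B:ℚ)+1) ≠ 0 := by positivity
  have hQ : ((Q:ℚ)+1) ≠ 0 := by positivity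
  have hT : ((T:ℚ)+1) ≠ 0 := by positivity
  have h2 : ((2:ℚ)^k) ≠ 0 := by positivity
  rw [← mul_le_mul_iff_of_pos_right hD]
  constructor <;> intro h
  · calc s*A*2^k*(Q+1)*(T+1) + ((B:ℚ)+1)*(Q+1)*(T+1) + P*2^k*(B+1)*(T+1)
        = (s * A/(B+1) + (2:ℚ)^(-(k:ℤ)) + P/(Q+1)) * (2^k*((B:ℚ)+1)*((Q:ℚ)+1)*((T:ℚ)+1)) := by
          rw [zpow_neg, zpow_natCast]; field_simp
      _ ≤ (R/(T+1)) * (2^k*((B:ℚ)+1)*((Q:ℚ)+1)*((T:ℚ)+1)) := h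
      _ = (R:ℚ)*2^k*(B+1)*(Q+1) := by field_simp
  · calc (s * A/(B+1) + (2:ℚ)^(-(k:ℤ)) + P/(Q+1)) * (2^k*((B:ℚ)+1)*((Q:ℚ)+1)*((T:ℚ)+1))
        = s*A*2^k*(Q+1)*(T+1) + ((B:ℚ)+1)*(Q+1)*(T+1) + P*2^k*(B+1)*(T+1) := by
          rw [zpow_neg, zpow_natCast]; field_simp
      _ ≤ (R:ℚ)*2^k*(B+1)*(Q+1) := h
      _ = (R/(T+1)) * (2^k*((B:ℚ)+1)*((Q:ℚ)+1)*((T:ℚ)+1)) := by field_simp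

lemma isubTest_iff (A B C P Q R T k : ℕ) :
    isubTest A B C P Q R T k = true ↔
      (-1:ℚ)^C * A/(B+1) + (2:ℚ)^(-(k:ℤ)) + P/(Q+1) ≤ R/(T+1) := by
  rcases Nat.even_or_odd C with hC | hC
  · rw [isubTest, if_pos (Nat.even_iff.1 hC), decide_eq_true_eq, hC.neg_one_pow, key_iff]
    rw [one_mul]
    constructor <;> intro h <;> exact_mod_cast h
  · rw [isubTest, if_neg (by simpa [Nat.odd_iff] using hC), decide_eq_true_eq,
      hC.neg_one_pow, key_iff]
    have h1 : ((-1:ℚ))*A*2^k*(Q+1)*(T+1) = -(A*2^k*(Q+1)*(T+1)) := by ring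
    rw [h1]
    constructor <;> intro h
    · have h2 : ((B:ℚ)+1)*((Q:ℚ)+1)*((T:ℚ)+1) + (P:ℚ)*2^k*((B:ℚ)+1)*((T:ℚ)+1)
          ≤ (R:ℚ)*2^k*((B:ℚ)+1)*((Q:ℚ)+1) + (A:ℚ)*2^k*((Q:ℚ)+1)*((T:ℚ)+1) := by
        exact_mod_cast h
      linarith
    · have h2 : ((B:ℚ)+1)*((Q:ℚ)+1)*((T:ℚ)+1) + (P:ℚ)*2^k*((B:ℚ)+1)*((T:ℚ)+1)
          ≤ (R:ℚ)*2^k*((B:ℚ)+1)*((Q:ℚ)+1) + (A:ℚ)*2^k*((Q:ℚ)+1)*((T:ℚ)+1) := by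
        linarith
      exact_mod_cast h2

lemma key_iff' (s : ℚ) (A B P Q R T k : ℕ) :
    ((P:ℚ)/(Q+1) + R/(T+1) + (2:ℚ)^(-(k:ℤ)) ≤ s * A/(B+1)) ↔
      (P:ℚ)*2^k*(B+1)*(T+1) + R*2^k*(B+1)*(Q+1) + ((B:ℚ)+1)*(Q+1)*(T+1)
        ≤ s*A*2^k*(Q+1)*(T+1) := by
  have hD : (0:ℚ) < 2^k*((B:ℚ)+1)*((Q:ℚ)+1)*((T:ℚ)+1) := by positivity
  have hB : ((B:ℚ)+1) ≠ 0 := by positivity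
  have hQ : ((Q:ℚ)+1) ≠ 0 := by positivity
  have hT : ((T:ℚ)+1) ≠ 0 := by positivity
  have h2 : ((2:ℚ)^k) ≠ 0 := by positivity
  rw [← mul_le_mul_iff_of_pos_right hD]
  have e1 : ((P:ℚ)/(Q+1) + R/(T+1) + (2:ℚ)^(-(k:ℤ))) * (2^k*((B:ℚ)+1)*((Q:ℚ)+1)*((T:ℚ)+1))
      = (P:ℚ)*2^k*(B+1)*(T+1) + R*2^k*(B+1)*(Q+1) + ((B:ℚ)+1)*(Q+1)*(T+1) := by
    rw [zpow_neg, zpow_natCast]; field_simp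
  have e2 : (s * A/(B+1)) * (2^k*((B:ℚ)+1)*((Q:ℚ)+1)*((T:ℚ)+1)) = s*A*2^k*(Q+1)*(T+1) := by
    field_simp
  rw [e1, e2]

lemma idisjTest_iff (A B C P Q R T k : ℕ) :
    idisjTest A B C P Q R T k = true ↔
      (P:ℚ)/(Q+1) + R/(T+1) + (2:ℚ)^(-(k:ℤ)) ≤ (-1:ℚ)^C * A/(B+1) := by
  rcases Nat.even_or_odd C with hC | hC
  · rw [idisjTest, if_pos (Nat.even_iff.1 hC), decide_eq_true_eq, hC.neg_one_pow, key_iff',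
      one_mul]
    constructor <;> intro h <;> exact_mod_cast h
  · rw [idisjTest, if_neg (by simpa [Nat.odd_iff] using hC)]
    simp only [Bool.false_eq_true, false_iff]
    intro h
    have h1 : (0:ℚ) < (P:ℚ)/(Q+1) + R/(T+1) + (2:ℚ)^(-(k:ℤ)) := by positivity
    have h2 : (-1:ℚ)^C * A/(B+1) ≤ 0 := by
      rw [hC.neg_one_pow]
      have h3 : (0:ℚ) ≤ (A:ℚ)/((B:ℚ)+1) := by positivity
      have e : (-1:ℚ)*(A:ℚ)/((B:ℚ)+1) = -((A:ℚ)/((B:ℚ)+1)) := by ring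
      rw [e]
      linarith
    linarith

end SCAux
namespace SCAux
section comp

variable {α : Type*} [Primcodable α] {fA fB fC fP fQ fR fT fk : α → ℕ}

lemma nat_pow_computable : Computable₂ ((· ^ ·) : ℕ → ℕ → ℕ) :=
  (Primrec₂.unpaired'.1 Nat.Primrec.pow).to_comp

private lemma cmul {f g : α → ℕ} (hf : Computable f) (hg : Computable g) :
    Computable fun a => f a * g a := Primrec.nat_mul.to_comp.comp hf hg

private lemma cadd {f g : α → ℕ} (hf : Computable f) (hg : Computable g) :
    Computable fun a => f a + g a := Primrec.nat_add.to_comp.comp hf hg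

private lemma cle {f g : α → ℕ} (hf : Computable f) (hg : Computable g) :
    Computable fun a => decide (f a ≤ g a) := Primrec.nat_le.decide.to_comp.comp hf hg

lemma isubTest_computable (hA : Computable fA) (hB : Computable fB) (hC : Computable fC)
    (hP : Computable fP) (hQ : Computable fQ) (hR : Computable fR) (hT : Computable fT)
    (hk : Computable fk) :
    Computable fun a => isubTest (fA a) (fB a) (fC a) (fP a) (fQ a) (fR a) (fT a) (fk a) := by
  have h2k : Computable fun a => 2 ^ fk a := nat_pow_computable.comp (Computable.const 2) hk
  have hB1 : Computable fun a => fB a + 1 := cadd hB (Computable.const 1)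
  have hQ1 : Computable fun a => fQ a + 1 := cadd hQ (Computable.const 1)
  have hT1 : Computable fun a => fT a + 1 := cadd hT (Computable.const 1)
  have hcond : Computable fun a => decide (fC a % 2 = 0) :=
    Primrec.eq.decide.to_comp.comp (Primrec.nat_mod.to_comp.comp hC (Computable.const 2))
      (Computable.const 0)
  have hx1 : Computable fun a =>
      decide (fA a*2^fk a*(fQ a+1)*(fT a+1) + (fB a+1)*(fQ a+1)*(fT a+1)
        + fP a*2^fk a*(fB a+1)*(fT a+1) ≤ fR a*2^fk a*(fB a+1)*(fQ a+1)) :=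
    cle (cadd (cadd (cmul (cmul (cmul hA h2k) hQ1) hT1) (cmul (cmul hB1 hQ1) hT1))
      (cmul (cmul (cmul hP h2k) hB1) hT1)) (cmul (cmul (cmul hR h2k) hB1) hQ1)
  have hx2 : Computable fun a =>
      decide ((fB a+1)*(fQ a+1)*(fT a+1) + fP a*2^fk a*(fB a+1)*(fT a+1)
        ≤ fR a*2^fk a*(fB a+1)*(fQ a+1) + fA a*2^fk a*(fQ a+1)*(fT a+1)) :=
    cle (cadd (cmul (cmul hB1 hQ1) hT1) (cmul (cmul (cmul hP h2k) hB1) hT1))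
      (cadd (cmul (cmul (cmul hR h2k) hB1) hQ1) (cmul (cmul (cmul hA h2k) hQ1) hT1))
  have := Computable.cond hcond hx1 hx2
  refine this.of_eq fun a => ?_
  by_cases h : fC a % 2 = 0 <;> simp [isubTest, h]

lemma idisjTest_computable (hA : Computable fA) (hB : Computable fB) (hC : Computable fC)
    (hP : Computable fP) (hQ : Computable fQ) (hR : Computable fR) (hT : Computable fT)
    (hk : Computable fk) :
    Computable fun a => idisjTest (fA a) (fB a) (fC a) (fP a) (fQ a) (fR a) (fT a) (fk a) := by
  have h2k : Computable fun a => 2 ^ fk a := nat_pow_computable.comp (Computable.const 2) hk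
  have hB1 : Computable fun a => fB a + 1 := cadd hB (Computable.const 1)
  have hQ1 : Computable fun a => fQ a + 1 := cadd hQ (Computable.const 1)
  have hT1 : Computable fun a => fT a + 1 := cadd hT (Computable.const 1)
  have hcond : Computable fun a => decide (fC a % 2 = 0) :=
    Primrec.eq.decide.to_comp.comp (Primrec.nat_mod.to_comp.comp hC (Computable.const 2))
      (Computable.const 0)
  have hx1 : Computable fun a =>
      decide (fP a*2^fk a*(fB a+1)*(fT a+1) + fR a*2^fk a*(fB a+1)*(fQ a+1)
        + (fB a+1)*(fQ a+1)*(fT a+1) ≤ fA a*2^fk a*(fQ a+1)*(fT a+1)) :=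
    cle (cadd (cadd (cmul (cmul (cmul hP h2k) hB1) hT1) (cmul (cmul (cmul hR h2k) hB1) hQ1))
      (cmul (cmul hB1 hQ1) hT1)) (cmul (cmul (cmul hA h2k) hQ1) hT1)
  have := Computable.cond hcond hx1 (Computable.const false)
  refine this.of_eq fun a => ?_
  by_cases h : fC a % 2 = 0 <;> simp [idisjTest, h]

end comp

/-- From a c.e. set of pairs, get a code whose `evaln` semidecides membership. -/
lemma ce_code {A : Set (ℕ × ℕ)}
    (h : ∃ f : ℕ × ℕ →. ℕ, Partrec f ∧ ∀ x, x ∈ A ↔ (f x).Dom) :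
    ∃ c : Nat.Partrec.Code, ∀ p : ℕ × ℕ,
      p ∈ A ↔ ∃ s, (Nat.Partrec.Code.evaln s c (Encodable.encode p)).isSome := by
  obtain ⟨f, hf, hdom⟩ := h
  obtain ⟨c, hc⟩ := Nat.Partrec.Code.exists_code.1 hf
  refine ⟨c, fun p => ?_⟩
  have he : Nat.Partrec.Code.eval c (Encodable.encode p) = (f p).map Encodable.encode := by
    rw [hc]
    simp only [Encodable.encodek, Part.coe_some, Part.bind_some]
  rw [hdom]
  constructor
  · intro hD
    obtain ⟨a, ha⟩ := Part.dom_iff_mem.1 hD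
    have hm : Encodable.encode a ∈ Nat.Partrec.Code.eval c (Encodable.encode p) := by
      rw [he]; exact Part.mem_map _ ha
    obtain ⟨s, hs⟩ := Nat.Partrec.Code.evaln_complete.1 hm
    exact ⟨s, Option.isSome_iff_exists.2 ⟨_, hs⟩⟩
  · rintro ⟨s, hs⟩
    obtain ⟨a, ha⟩ := Option.isSome_iff_exists.1 hs
    have hm : a ∈ Nat.Partrec.Code.eval c (Encodable.encode p) :=
      Nat.Partrec.Code.evaln_complete.2 ⟨s, ha⟩
    rw [he] at hm
    obtain ⟨b, hb, -⟩ := (Part.mem_map_iff _).1 hm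
    exact Part.dom_iff_mem.2 ⟨b, hb⟩

end SCAux

namespace SCAux

lemma orB_iff {a b : Bool} : (a || b) = true ↔ a = true ∨ b = true := by simp

lemma bdd_exists {φ : ℕ → ℕ → Prop} (mono : ∀ t N N', N ≤ N' → φ t N → φ t N') :
    ∀ m, (∀ t, t < m → ∃ N, φ t N) → ∃ N, ∀ t, t < m → φ t N := by
  intro m
  induction m with
  | zero => intro _; exact ⟨0, fun t ht => absurd ht (Nat.not_lt_zero t)⟩
  | succ m ih =>
    intro h
    obtain ⟨N1, hN1⟩ := ih (fun t ht => h t (Nat.lt_succ_of_lt ht))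
    obtain ⟨N2, hN2⟩ := h m (Nat.lt_succ_self m)
    refine ⟨max N1 N2, fun t ht => ?_⟩
    rcases Nat.lt_succ_iff_lt_or_eq.1 ht with h' | rfl
    · exact mono _ _ _ (le_max_left _ _) (hN1 t h')
    · exact mono _ _ _ (le_max_right _ _) hN2

lemma q_repr {q : ℚ} {a b c : ℕ} (hq : q = (-1:ℚ)^c * (a:ℚ) / ((b:ℚ)+1)) (hpos : 0 < q) :
    q = (a:ℚ) / ((b:ℚ)+1) := by
  rcases Nat.even_or_odd c with h | h
  · rw [hq, h.neg_one_pow, one_mul]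
  · exfalso
    rw [hq, h.neg_one_pow] at hpos
    have h3 : (0:ℚ) ≤ (a:ℚ)/((b:ℚ)+1) := by positivity
    have e : (-1:ℚ)*(a:ℚ)/((b:ℚ)+1) = -((a:ℚ)/((b:ℚ)+1)) := by ring
    rw [e] at hpos
    linarith

/-- The bounded Boolean test for the main enumeration. -/
def QBdef (elem : ℕ → ℕ → ℕ) (bar : ℕ → ℕ) (isub idisj : ℕ → ℕ → ℕ → Bool) (j₀ : ℕ)
    (j' j N : ℕ) : Bool :=
  allB (fun t =>
    (exB (fun t' => exB (fun k => isub (elem j' t) (elem j t') k) (N+1)) (bar j + 1)) ||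
    (allB (fun t'' => exB (fun k => idisj (elem j' t) (elem j₀ t'') k) (N+1)) (bar j₀ + 1)))
    (bar j' + 1)

lemma QBdef_computable {elem : ℕ → ℕ → ℕ} {bar : ℕ → ℕ} {isub idisj : ℕ → ℕ → ℕ → Bool}
    (helem : Computable₂ elem) (hbar : Computable bar)
    (hisub : Computable fun p : ℕ × ℕ × ℕ => isub p.1 p.2.1 p.2.2)
    (hidisj : Computable fun p : ℕ × ℕ × ℕ => idisj p.1 p.2.1 p.2.2) (j₀ : ℕ) :
    Computable fun w : ℕ × ℕ × ℕ => QBdef elem bar isub idisj j₀ w.1 w.2.1 w.2.2 := by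
  have c1 : Computable (Nat.succ) := Primrec.succ.to_comp
  -- innermost for isub : z : ((ℕ×ℕ×ℕ)×ℕ)×ℕ ~ ((w,t),t'), then k
  have hg3 : Computable₂ fun (z : ((ℕ × ℕ × ℕ) × ℕ) × ℕ) (k : ℕ) =>
      isub (elem z.1.1.1 z.1.2) (elem z.1.1.2.1 z.2) k := by
    have hu : Computable fun z : ((ℕ × ℕ × ℕ) × ℕ) × ℕ => elem z.1.1.1 z.1.2 :=
      helem.comp (Computable.fst.comp (Computable.fst.comp Computable.fst))
        (Computable.snd.comp Computable.fst)
    have hl : Computable fun z : ((ℕ × ℕ × ℕ) × ℕ) × ℕ => elem z.1.1.2.1 z.2 :=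
      helem.comp (Computable.fst.comp (Computable.snd.comp
        (Computable.fst.comp Computable.fst))) Computable.snd
    exact (hisub.comp (((hu.comp Computable.fst).pair
      ((hl.comp Computable.fst).pair Computable.snd)))).to₂
  -- left disjunct as a function of ((w,t),t')
  have hleft2 : Computable₂ fun (y : (ℕ × ℕ × ℕ) × ℕ) (t' : ℕ) =>
      exB (fun k => isub (elem y.1.1 y.2) (elem y.1.2.1 t') k) (y.1.2.2 + 1) := by
    have := exB_computable (g := fun (z : ((ℕ × ℕ × ℕ) × ℕ) × ℕ) k =>
        isub (elem z.1.1.1 z.1.2) (elem z.1.1.2.1 z.2) k)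
      (h := fun z => z.1.1.2.2 + 1) hg3
      (c1.comp ((Computable.snd.comp Computable.snd).comp
        (Computable.fst.comp Computable.fst)))
    exact this.to₂
  have hleft : Computable fun y : (ℕ × ℕ × ℕ) × ℕ =>
      exB (fun t' => exB (fun k => isub (elem y.1.1 y.2) (elem y.1.2.1 t') k) (y.1.2.2 + 1))
        (bar y.1.2.1 + 1) :=
    exB_computable hleft2 (c1.comp (hbar.comp ((Computable.fst.comp Computable.snd).comp
      Computable.fst)))
  -- inner for idisj
  have hg3' : Computable₂ fun (z : ((ℕ × ℕ × ℕ) × ℕ) × ℕ) (k : ℕ) =>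
      idisj (elem z.1.1.1 z.1.2) (elem j₀ z.2) k := by
    have hu : Computable fun z : ((ℕ × ℕ × ℕ) × ℕ) × ℕ => elem z.1.1.1 z.1.2 :=
      helem.comp (Computable.fst.comp (Computable.fst.comp Computable.fst))
        (Computable.snd.comp Computable.fst)
    have hv : Computable fun z : ((ℕ × ℕ × ℕ) × ℕ) × ℕ => elem j₀ z.2 :=
      helem.comp (Computable.const j₀) Computable.snd
    exact (hidisj.comp (((hu.comp Computable.fst).pair
      ((hv.comp Computable.fst).pair Computable.snd)))).to₂
  have hright2 : Computable₂ fun (y : (ℕ × ℕ × ℕ) × ℕ) (t'' : ℕ) =>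
      exB (fun k => idisj (elem y.1.1 y.2) (elem j₀ t'') k) (y.1.2.2 + 1) := by
    have := exB_computable (g := fun (z : ((ℕ × ℕ × ℕ) × ℕ) × ℕ) k =>
        idisj (elem z.1.1.1 z.1.2) (elem j₀ z.2) k)
      (h := fun z => z.1.1.2.2 + 1) hg3'
      (c1.comp ((Computable.snd.comp Computable.snd).comp
        (Computable.fst.comp Computable.fst)))
    exact this.to₂
  have hright : Computable fun y : (ℕ × ℕ × ℕ) × ℕ =>
      allB (fun t'' => exB (fun k => idisj (elem y.1.1 y.2) (elem j₀ t'') k) (y.1.2.2 + 1))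
        (bar j₀ + 1) :=
    allB_computable hright2 (Computable.const (bar j₀ + 1))
  have hg1 : Computable₂ fun (w : ℕ × ℕ × ℕ) (t : ℕ) =>
      ((exB (fun t' => exB (fun k => isub (elem w.1 t) (elem w.2.1 t') k) (w.2.2+1))
          (bar w.2.1 + 1)) ||
       (allB (fun t'' => exB (fun k => idisj (elem w.1 t) (elem j₀ t'') k) (w.2.2+1))
          (bar j₀ + 1))) :=
    (Primrec.or.to_comp.comp hleft hright).to₂
  exact allB_computable hg1 (c1.comp (hbar.comp Computable.fst))

lemma QBdef_iff {elem : ℕ → ℕ → ℕ} {bar : ℕ → ℕ} {isub idisj : ℕ → ℕ → ℕ → Bool} {j₀ : ℕ}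
    {I1 I2 : ℕ → ℕ → Prop}
    (hisub : ∀ u l, I1 u l ↔ ∃ k, isub u l k = true)
    (hidisj : ∀ u v, I2 u v ↔ ∃ k, idisj u v k = true) (j' j : ℕ) :
    (∃ N, QBdef elem bar isub idisj j₀ j' j N = true) ↔
      ∀ t, t < bar j' + 1 →
        (∃ t', t' < bar j + 1 ∧ I1 (elem j' t) (elem j t')) ∨
        (∀ t'', t'' < bar j₀ + 1 → I2 (elem j' t) (elem j₀ t'')) := by
  constructor
  · rintro ⟨N, hN⟩ t ht
    have h1 := allB_iff.1 hN t ht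
    rcases orB_iff.1 h1 with h2 | h2
    · obtain ⟨t', ht', h3⟩ := exB_iff.1 h2
      obtain ⟨k, -, h4⟩ := exB_iff.1 h3
      exact Or.inl ⟨t', ht', (hisub _ _).2 ⟨k, h4⟩⟩
    · refine Or.inr fun t'' ht'' => ?_
      obtain ⟨k, -, h4⟩ := exB_iff.1 (allB_iff.1 h2 t'' ht'')
      exact (hidisj _ _).2 ⟨k, h4⟩
  · intro hP
    set φ : ℕ → ℕ → Prop := fun t N =>
      ((exB (fun t' => exB (fun k => isub (elem j' t) (elem j t') k) (N+1)) (bar j + 1)) ||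
       (allB (fun t'' => exB (fun k => idisj (elem j' t) (elem j₀ t'') k) (N+1))
        (bar j₀ + 1))) = true with hφ
    have mono : ∀ t N N', N ≤ N' → φ t N → φ t N' := by
      intro t N N' hNN h
      rcases orB_iff.1 h with h2 | h2
      · refine orB_iff.2 (Or.inl ?_)
        obtain ⟨t', ht', h3⟩ := exB_iff.1 h2
        obtain ⟨k, hk, h4⟩ := exB_iff.1 h3
        exact exB_iff.2 ⟨t', ht', exB_iff.2 ⟨k, lt_of_lt_of_le hk (by omega), h4⟩⟩
      · refine orB_iff.2 (Or.inr (allB_iff.2 fun t'' ht'' => ?_))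
        obtain ⟨k, hk, h4⟩ := exB_iff.1 (allB_iff.1 h2 t'' ht'')
        exact exB_iff.2 ⟨k, lt_of_lt_of_le hk (by omega), h4⟩
    have hstep : ∀ t, t < bar j' + 1 → ∃ N, φ t N := by
      intro t ht
      rcases hP t ht with ⟨t', ht', h1⟩ | h1
      · obtain ⟨k, hk⟩ := (hisub _ _).1 h1
        exact ⟨k, orB_iff.2 (Or.inl (exB_iff.2 ⟨t', ht',
          exB_iff.2 ⟨k, Nat.lt_succ_self k, hk⟩⟩))⟩
      · have h2 : ∀ t'', t'' < bar j₀ + 1 → ∃ N,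
            (∃ k, k < N + 1 ∧ idisj (elem j' t) (elem j₀ t'') k = true) := by
          intro t'' ht''
          obtain ⟨k, hk⟩ := (hidisj _ _).1 (h1 t'' ht'')
          exact ⟨k, k, Nat.lt_succ_self k, hk⟩
        obtain ⟨N, hN⟩ := bdd_exists (φ := fun t'' N =>
          ∃ k, k < N + 1 ∧ idisj (elem j' t) (elem j₀ t'') k = true)
          (by rintro a b b' hbb ⟨k, hk, h⟩; exact ⟨k, by omega, h⟩) (bar j₀ + 1) h2
        refine ⟨N, orB_iff.2 (Or.inr (allB_iff.2 fun t'' ht'' => ?_))⟩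
        obtain ⟨k, hk, h⟩ := hN t'' ht''
        exact exB_iff.2 ⟨k, hk, h⟩
    obtain ⟨N, hN⟩ := bdd_exists mono (bar j' + 1) hstep
    exact ⟨N, allB_iff.2 hN⟩

end SCAux

namespace SCAux

lemma exists_pow_neg_lt {ε : ℝ} (hε : 0 < ε) : ∃ k : ℕ, (2:ℝ)^(-(k:ℤ)) < ε := by
  obtain ⟨n, hn⟩ := exists_pow_lt_of_lt_one hε (by norm_num : (1/2 : ℝ) < 1)
  refine ⟨n, ?_⟩
  have : (2:ℝ)^(-(n:ℤ)) = (1/2)^n := by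
    rw [zpow_neg, zpow_natCast, one_div, inv_pow]
  rwa [this]

end SCAux

namespace CMS

variable {X : Type*} [MetricSpace X] (M : CMS X)

lemma rho_pos (i : ℕ) : 0 < M.rho i := by
  have h := M.q_pos (M.tau2 i)
  show (0:ℝ) < ((M.q (M.tau2 i) : ℚ) : ℝ)
  exact_mod_cast h

lemma mem_J_iff {x : X} {j : ℕ} : x ∈ M.J j ↔ ∃ i ∈ M.idx j, x ∈ M.I i := by
  simp [CMS.J]

lemma isOpen_J (j : ℕ) : IsOpen (M.J j) := isOpen_biUnion fun i _ => isOpen_ball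

lemma ISubF_sub {i j : ℕ} (h : M.ISubF i j) : M.Ihat i ⊆ M.I j := by
  intro x hx
  have hx' : dist x (M.lam i) ≤ M.rho i := mem_closedBall.1 hx
  have ht : dist x (M.lam j) ≤ dist x (M.lam i) + dist (M.lam i) (M.lam j) := dist_triangle _ _ _
  have h' : dist (M.lam i) (M.lam j) + M.rho i < M.rho j := h
  exact mem_ball.2 (by linarith)

lemma IDisj_not_mem {i j : ℕ} {x : X} (h : M.IDisj i j) (hx : x ∈ M.Ihat i) :
    x ∉ M.Ihat j := by
  intro hx'
  have h1 : dist x (M.lam i) ≤ M.rho i := mem_closedBall.1 hx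
  have h2 : dist x (M.lam j) ≤ M.rho j := mem_closedBall.1 hx'
  have ht : dist (M.lam i) (M.lam j) ≤ dist (M.lam i) x + dist x (M.lam j) := dist_triangle _ _ _
  have h' : M.rho i + M.rho j < dist (M.lam i) (M.lam j) := h
  rw [dist_comm (M.lam i) x] at ht
  linarith

lemma approx (x : X) {ε : ℝ} (hε : 0 < ε) :
    ∃ u, dist x (M.lam u) < ε/4 ∧ ε/4 < M.rho u ∧ M.rho u < ε/2 := by
  obtain ⟨m, hm⟩ := M.dense_alpha.exists_dist_lt x (by linarith : 0 < ε/4)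
  obtain ⟨r, hr1, hr2⟩ := exists_rat_btwn (by linarith : ε/4 < ε/2)
  have hrpos : 0 < r := by
    have : (0:ℝ) < r := lt_trans (by linarith) hr1
    exact_mod_cast this
  obtain ⟨n, hn⟩ := M.q_surj r hrpos
  obtain ⟨u, hu1, hu2⟩ := M.tau_surj m n
  refine ⟨u, ?_, ?_, ?_⟩
  · show dist x (M.alpha (M.tau1 u)) < ε/4
    rw [hu1]; exact hm
  · show ε/4 < ((M.q (M.tau2 u) : ℚ) : ℝ)
    rw [hu2, hn]; exact hr1
  · show ((M.q (M.tau2 u) : ℚ) : ℝ) < ε/2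
    rw [hu2, hn]; exact hr2

lemma exists_idx_eq {T : Finset ℕ} (hT : T.Nonempty) : ∃ j, M.idx j = T := by
  obtain ⟨j, hj⟩ := M.seq_surj T.toList (by
    intro h
    exact Finset.nonempty_iff_ne_empty.1 hT (by simpa [Finset.toList_eq_nil] using h))
  refine ⟨j, ?_⟩
  ext a
  simp only [CMS.idx, Finset.mem_image, Finset.mem_range]
  rw [← Finset.mem_toList, ← hj]
  simp [List.mem_map, List.mem_range]

lemma exists_ISubF_self (l : ℕ) : ∃ u, M.ISubF u l := by
  have hpos : 0 < M.q (M.tau2 l) / 2 := by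
    have := M.q_pos (M.tau2 l); linarith
  obtain ⟨n, hn⟩ := M.q_surj _ hpos
  obtain ⟨u, hu1, hu2⟩ := M.tau_surj (M.tau1 l) n
  refine ⟨u, ?_⟩
  show dist (M.alpha (M.tau1 u)) (M.alpha (M.tau1 l)) + ((M.q (M.tau2 u) : ℚ) : ℝ)
    < ((M.q (M.tau2 l) : ℚ) : ℝ)
  rw [hu1, hu2, hn, dist_self]
  have hq := M.q_pos (M.tau2 l)
  have : ((M.q (M.tau2 l) / 2 : ℚ) : ℝ) < ((M.q (M.tau2 l) : ℚ) : ℝ) := by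
    exact_mod_cast (by linarith : M.q (M.tau2 l) / 2 < M.q (M.tau2 l))
  linarith

section atoms

lemma ISubF_iff_exists (F : ℕ → ℕ → ℕ → ℚ)
    (hF : ∀ x y i : ℕ, |dist (M.alpha x) (M.alpha y) - (F x y i : ℝ)| < (2:ℝ)^(-(i:ℤ)))
    {u l : ℕ} :
    M.ISubF u l ↔ ∃ k : ℕ, F (M.tau1 u) (M.tau1 l) k + (2:ℚ)^(-(k:ℤ)) + M.q (M.tau2 u)
      ≤ M.q (M.tau2 l) := by
  constructor
  · intro h
    have h' : dist (M.alpha (M.tau1 u)) (M.alpha (M.tau1 l)) + ((M.q (M.tau2 u) : ℚ) : ℝ)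
        < ((M.q (M.tau2 l) : ℚ) : ℝ) := h
    set d := dist (M.alpha (M.tau1 u)) (M.alpha (M.tau1 l)) with hd
    obtain ⟨k, hk⟩ := SCAux.exists_pow_neg_lt
      (by linarith : (0:ℝ) < (((M.q (M.tau2 l) : ℚ) : ℝ) - ((M.q (M.tau2 u) : ℚ) : ℝ) - d)/2)
    have hb := hF (M.tau1 u) (M.tau1 l) k
    rw [abs_lt] at hb
    refine ⟨k, ?_⟩
    rw [← Rat.cast_le (K := ℝ)]
    push_cast
    linarith
  · rintro ⟨k, hk⟩
    rw [← Rat.cast_le (K := ℝ)] at hk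
    push_cast at hk
    have hb := hF (M.tau1 u) (M.tau1 l) k
    rw [abs_lt] at hb
    show dist (M.alpha (M.tau1 u)) (M.alpha (M.tau1 l)) + ((M.q (M.tau2 u) : ℚ) : ℝ)
      < ((M.q (M.tau2 l) : ℚ) : ℝ)
    linarith

lemma IDisj_iff_exists (F : ℕ → ℕ → ℕ → ℚ)
    (hF : ∀ x y i : ℕ, |dist (M.alpha x) (M.alpha y) - (F x y i : ℝ)| < (2:ℝ)^(-(i:ℤ)))
    {u v : ℕ} :
    M.IDisj u v ↔ ∃ k : ℕ, M.q (M.tau2 u) + M.q (M.tau2 v) + (2:ℚ)^(-(k:ℤ))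
      ≤ F (M.tau1 u) (M.tau1 v) k := by
  constructor
  · intro h
    have h' : ((M.q (M.tau2 u) : ℚ) : ℝ) + ((M.q (M.tau2 v) : ℚ) : ℝ)
        < dist (M.alpha (M.tau1 u)) (M.alpha (M.tau1 v)) := h
    set d := dist (M.alpha (M.tau1 u)) (M.alpha (M.tau1 v)) with hd
    obtain ⟨k, hk⟩ := SCAux.exists_pow_neg_lt
      (by linarith : (0:ℝ) < (d - ((M.q (M.tau2 u) : ℚ) : ℝ) - ((M.q (M.tau2 v) : ℚ) : ℝ))/2)
    have hb := hF (M.tau1 u) (M.tau1 v) k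
    rw [abs_lt] at hb
    refine ⟨k, ?_⟩
    rw [← Rat.cast_le (K := ℝ)]
    push_cast
    linarith
  · rintro ⟨k, hk⟩
    rw [← Rat.cast_le (K := ℝ)] at hk
    push_cast at hk
    have hb := hF (M.tau1 u) (M.tau1 v) k
    rw [abs_lt] at hb
    show ((M.q (M.tau2 u) : ℚ) : ℝ) + ((M.q (M.tau2 v) : ℚ) : ℝ)
      < dist (M.alpha (M.tau1 u)) (M.alpha (M.tau1 v))
    have h2 : (0:ℝ) < (2:ℝ)^(-(k:ℤ)) := by positivity
    linarith

end atoms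

end CMS

namespace CMS

variable {X : Type*} [MetricSpace X] (M : CMS X)

lemma mem_Jhat_iff {x : X} {j : ℕ} : x ∈ M.Jhat j ↔ ∃ i ∈ M.idx j, x ∈ M.Ihat i := by
  simp [CMS.Jhat]

lemma mem_idx_iff {u j : ℕ} : u ∈ M.idx j ↔ ∃ t, t < M.bar j + 1 ∧ M.elem j t = u := by
  simp [CMS.idx, Finset.mem_image, Finset.mem_range]

/-- The key characterization: `Î_i ∩ (S ∩ Ĵ_{j₀}) ⊆ J_j` iff there is `j'` with
`Î_i ∩ S ⊆ J_{j'}` whose balls are each formally inside `J_j` or formally disjoint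
from `Ĵ_{j₀}`. -/
lemma char (S : Set X) (hSc : ∀ (x : X) (r : ℝ), IsCompact (S ∩ Metric.closedBall x r))
    (j₀ i j : ℕ) :
    (M.Ihat i ∩ (S ∩ M.Jhat j₀) ⊆ M.J j) ↔
      ∃ j', (M.Ihat i ∩ S ⊆ M.J j') ∧
        ∀ u ∈ M.idx j', (∃ l ∈ M.idx j, M.ISubF u l) ∨ (∀ v ∈ M.idx j₀, M.IDisj u v) := by
  constructor
  · intro h
    classical
    set A : Set X := M.Ihat i ∩ S with hA
    have hAc : IsCompact A := by
      rw [hA, Set.inter_comm]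
      exact hSc (M.lam i) (M.rho i)
    set good : ℕ → Prop := fun u =>
      (∃ l ∈ M.idx j, M.ISubF u l) ∨ (∀ v ∈ M.idx j₀, M.IDisj u v) with hgood
    have claim : ∀ x ∈ A, ∃ u, good u ∧ x ∈ M.I u := by
      intro x hx
      by_cases hx0 : x ∈ M.Jhat j₀
      · have hxJ : x ∈ M.J j := h ⟨hx.1, hx.2, hx0⟩
        obtain ⟨l, hl, hxl⟩ := (M.mem_J_iff).1 hxJ
        have hxl' : dist x (M.lam l) < M.rho l := mem_ball.1 hxl
        set ε : ℝ := M.rho l - dist x (M.lam l) with hε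
        have hεpos : 0 < ε := by rw [hε]; linarith
        obtain ⟨u, h1, h2, h3⟩ := M.approx x hεpos
        refine ⟨u, Or.inl ⟨l, hl, ?_⟩, mem_ball.2 (by linarith)⟩
        have ht : dist (M.lam u) (M.lam l) ≤ dist (M.lam u) x + dist x (M.lam l) :=
          dist_triangle _ _ _
        rw [dist_comm (M.lam u) x] at ht
        show dist (M.lam u) (M.lam l) + M.rho u < M.rho l
        have : dist x (M.lam l) = M.rho l - ε := by rw [hε]; ring
        linarith
      · set δ : ℝ := (M.idx j₀).inf' (M.idx_nonempty j₀)
          (fun v => dist x (M.lam v) - M.rho v) with hδ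
        have hδpos : 0 < δ := by
          rw [hδ, Finset.lt_inf'_iff]
          intro v hv
          have : x ∉ M.Ihat v := fun hmem => hx0 ((M.mem_Jhat_iff).2 ⟨v, hv, hmem⟩)
          have h2 : ¬ dist x (M.lam v) ≤ M.rho v := fun hle => this (mem_closedBall.2 hle)
          linarith [lt_of_not_ge h2]
        obtain ⟨u, h1, h2, h3⟩ := M.approx x hδpos
        refine ⟨u, Or.inr fun v hv => ?_, mem_ball.2 (by linarith)⟩
        have hinf : δ ≤ dist x (M.lam v) - M.rho v := by
          rw [hδ]; exact Finset.inf'_le _ hv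
        have ht : dist x (M.lam v) ≤ dist x (M.lam u) + dist (M.lam u) (M.lam v) :=
          dist_triangle _ _ _
        show M.rho u + M.rho v < dist (M.lam u) (M.lam v)
        linarith
    have hcover : A ⊆ ⋃ u : {u : ℕ // good u}, M.I u.1 := by
      intro x hx
      obtain ⟨u, hu, hxu⟩ := claim x hx
      exact Set.mem_iUnion.2 ⟨⟨u, hu⟩, hxu⟩
    obtain ⟨t, ht⟩ := hAc.elim_finite_subcover (fun u : {u : ℕ // good u} => M.I u.1)
      (fun _ => isOpen_ball) hcover
    obtain ⟨l₀, hl₀⟩ := M.idx_nonempty j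
    obtain ⟨u₀, hu₀⟩ := M.exists_ISubF_self l₀
    set T : Finset ℕ := insert u₀ (t.image Subtype.val) with hT
    obtain ⟨j', hj'⟩ := M.exists_idx_eq (T := T) (Finset.insert_nonempty _ _)
    refine ⟨j', ?_, ?_⟩
    · intro x hx
      have := ht hx
      obtain ⟨u, hu, hxu⟩ := Set.mem_iUnion₂.1 this
      refine (M.mem_J_iff).2 ⟨u.1, ?_, hxu⟩
      rw [hj', hT]
      exact Finset.mem_insert_of_mem (Finset.mem_image.2 ⟨u, hu, rfl⟩)
    · intro u hu
      rw [hj', hT] at hu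
      rcases Finset.mem_insert.1 hu with rfl | hu
      · exact Or.inl ⟨l₀, hl₀, hu₀⟩
      · obtain ⟨w, _, rfl⟩ := Finset.mem_image.1 hu
        exact w.2
  · rintro ⟨j', hcov, hgood⟩ x ⟨hxi, hxS, hxJ0⟩
    obtain ⟨u, hu, hxu⟩ := (M.mem_J_iff).1 (hcov ⟨hxi, hxS⟩)
    rcases hgood u hu with ⟨l, hl, hsub⟩ | hdisj
    · exact (M.mem_J_iff).2 ⟨l, hl, M.ISubF_sub hsub (ball_subset_closedBall hxu)⟩
    · exfalso
      obtain ⟨v, hv, hxv⟩ := (M.mem_Jhat_iff).1 hxJ0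
      exact M.IDisj_not_mem (hdisj v hv) (ball_subset_closedBall hxu) hxv

end CMS

/-- For a semicomputable `S` and `K ⊆ U ⊆ S` with `K` compact and `U`
open in `S`, there is a semicomputable compact `S'` with `K ⊆ S' ⊆ U`. -/
theorem exists_semicomputable_compact_between {X : Type*} [MetricSpace X] (M : CMS X)
    (S K U : Set X) (hS : M.Semicomputable S)
    (hKS : K ⊆ S) (hUS : U ⊆ S) (hK : IsCompact K)
    (hU : ∃ V : Set X, IsOpen V ∧ U = V ∩ S) (hKU : K ⊆ U) :
    ∃ S' : Set X, S' ⊆ S ∧ IsCompact S' ∧ M.Semicomputable S' ∧ K ⊆ S' ∧ S' ⊆ U := by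
  classical
  obtain ⟨V, hV, hUV⟩ := hU
  rcases K.eq_empty_or_nonempty with hKe | hKne
  · refine ⟨∅, Set.empty_subset _, isCompact_empty, ⟨?_, ?_⟩, by rw [hKe], Set.empty_subset _⟩
    · intro x r; rw [Set.empty_inter]; exact isCompact_empty
    · refine ⟨fun _ => Part.some 0, Computable.partrec (Computable.const 0), fun p => ?_⟩
      simp [Set.inter_empty, Set.empty_subset, Part.some_dom]
  -- the rational-ball cover of K inside V
  have hcov : ∀ x ∈ K, ∃ u : {u : ℕ // M.Ihat u ⊆ V}, x ∈ M.I u.1 := by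
    intro x hx
    have hxV : x ∈ V := by
      have := hKU hx; rw [hUV] at this; exact this.1
    obtain ⟨ε, hε, hball⟩ := Metric.isOpen_iff.1 hV x hxV
    obtain ⟨u, h1, h2, h3⟩ := M.approx x hε
    have hmem : x ∈ M.I u := mem_ball.2 (by linarith)
    have hsub : M.Ihat u ⊆ V := by
      intro y hy
      have hy' : dist y (M.lam u) ≤ M.rho u := mem_closedBall.1 hy
      have htr : dist y x ≤ dist y (M.lam u) + dist (M.lam u) x := dist_triangle _ _ _
      rw [dist_comm (M.lam u) x] at htr
      exact hball (mem_ball.2 (by linarith))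
    exact ⟨⟨u, hsub⟩, hmem⟩
  obtain ⟨t, ht⟩ := hK.elim_finite_subcover (fun u : {u : ℕ // M.Ihat u ⊆ V} => M.I u.1)
    (fun _ => isOpen_ball)
    (fun x hx => Set.mem_iUnion.2 (let ⟨u, hu⟩ := hcov x hx; ⟨u, hu⟩))
  obtain ⟨x₀, hx₀⟩ := hKne
  obtain ⟨u₁, hu₁, -⟩ := Set.mem_iUnion₂.1 (ht hx₀)
  obtain ⟨j₀, hj₀⟩ := M.exists_idx_eq (T := t.image Subtype.val)
    ⟨u₁.1, Finset.mem_image.2 ⟨u₁, hu₁, rfl⟩⟩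
  set S' : Set X := S ∩ M.Jhat j₀ with hS'
  have hS'S : S' ⊆ S := Set.inter_subset_left
  have hS'c : IsCompact S' := by
    rw [hS', CMS.Jhat, Set.inter_iUnion₂]
    exact (M.idx j₀).isCompact_biUnion fun v _ => hS.1 (M.lam v) (M.rho v)
  have hKS' : K ⊆ S' := by
    intro x hx
    refine ⟨hKS hx, ?_⟩
    obtain ⟨u, hu, hxu⟩ := Set.mem_iUnion₂.1 (ht hx)
    exact (M.mem_Jhat_iff).2 ⟨u.1, by rw [hj₀]; exact Finset.mem_image.2 ⟨u, hu, rfl⟩,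
      ball_subset_closedBall hxu⟩
  have hS'U : S' ⊆ U := by
    rintro x ⟨hxS, hxJ⟩
    obtain ⟨v, hv, hxv⟩ := (M.mem_Jhat_iff).1 hxJ
    rw [hj₀] at hv
    obtain ⟨w, -, rfl⟩ := Finset.mem_image.1 hv
    rw [hUV]
    exact ⟨w.2 hxv, hxS⟩
  -- computability data
  obtain ⟨F, ⟨aF, bF, cF, haF, hbF, hcF, hFf⟩, hFb⟩ := M.dist_comp
  obtain ⟨aq, bq, cq, haq, hbq, hcq, hqf⟩ := M.q_comp
  have hqr : ∀ n, M.q n = (aq n : ℚ) / ((bq n : ℚ) + 1) :=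
    fun n => SCAux.q_repr (hqf n) (M.q_pos n)
  obtain ⟨c₀, hc₀⟩ := SCAux.ce_code hS.2
  set isub : ℕ → ℕ → ℕ → Bool := fun u l k => SCAux.isubTest
    (aF (M.tau1 u) (M.tau1 l) k) (bF (M.tau1 u) (M.tau1 l) k) (cF (M.tau1 u) (M.tau1 l) k)
    (aq (M.tau2 u)) (bq (M.tau2 u)) (aq (M.tau2 l)) (bq (M.tau2 l)) k with hisubdef
  set idisj : ℕ → ℕ → ℕ → Bool := fun u v k => SCAux.idisjTest
    (aF (M.tau1 u) (M.tau1 v) k) (bF (M.tau1 u) (M.tau1 v) k) (cF (M.tau1 u) (M.tau1 v) k)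
    (aq (M.tau2 u)) (bq (M.tau2 u)) (aq (M.tau2 v)) (bq (M.tau2 v)) k with hidisjdef
  have hisub_iff : ∀ u l, M.ISubF u l ↔ ∃ k, isub u l k = true := by
    intro u l
    rw [M.ISubF_iff_exists F hFb]
    refine exists_congr fun k => ?_
    rw [hisubdef]
    rw [SCAux.isubTest_iff, ← hFf, ← hqr, ← hqr]
  have hidisj_iff : ∀ u v, M.IDisj u v ↔ ∃ k, idisj u v k = true := by
    intro u v
    rw [M.IDisj_iff_exists F hFb]
    refine exists_congr fun k => ?_
    rw [hidisjdef]
    rw [SCAux.idisjTest_iff, ← hFf, ← hqr, ← hqr]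
  have hQB := SCAux.QBdef_iff (elem := M.elem) (bar := M.bar) (j₀ := j₀) hisub_iff hidisj_iff
  have hPbridge : ∀ j' j : ℕ,
      (∀ tt, tt < M.bar j' + 1 →
        (∃ t', t' < M.bar j + 1 ∧ M.ISubF (M.elem j' tt) (M.elem j t')) ∨
        (∀ t'', t'' < M.bar j₀ + 1 → M.IDisj (M.elem j' tt) (M.elem j₀ t''))) ↔
      ∀ u ∈ M.idx j', (∃ l ∈ M.idx j, M.ISubF u l) ∨ (∀ v ∈ M.idx j₀, M.IDisj u v) := by
    intro j' j
    constructor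
    · intro h u hu
      obtain ⟨tt, htt, rfl⟩ := (M.mem_idx_iff).1 hu
      rcases h tt htt with ⟨t', ht', hs⟩ | hd
      · exact Or.inl ⟨M.elem j t', (M.mem_idx_iff).2 ⟨t', ht', rfl⟩, hs⟩
      · refine Or.inr fun v hv => ?_
        obtain ⟨t'', ht'', rfl⟩ := (M.mem_idx_iff).1 hv
        exact hd t'' ht''
    · intro h tt htt
      rcases h (M.elem j' tt) ((M.mem_idx_iff).2 ⟨tt, htt, rfl⟩) with ⟨l, hl, hs⟩ | hd
      · obtain ⟨t', ht', rfl⟩ := (M.mem_idx_iff).1 hl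
        exact Or.inl ⟨t', ht', hs⟩
      · exact Or.inr fun t'' ht'' => hd _ ((M.mem_idx_iff).2 ⟨t'', ht'', rfl⟩)
  refine ⟨S', hS'S, hS'c, ⟨fun x r => hS'c.inter_right Metric.isClosed_closedBall, ?_⟩, hKS', hS'U⟩
  set G : ℕ × ℕ → ℕ → Bool := fun p n =>
    SCAux.exB (fun j' =>
      ((Nat.Partrec.Code.evaln n c₀ (Nat.pair p.1 j')).isSome
        && SCAux.exB (fun N => SCAux.QBdef M.elem M.bar isub idisj j₀ j' p.2 N) n)) n
    with hG
  refine ⟨fun p => Nat.rfindOpt (fun n => bif G p n then some 0 else none), ?_, ?_⟩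
  · apply Partrec.rfindOpt
    have hisubc : Computable fun p : ℕ × ℕ × ℕ => isub p.1 p.2.1 p.2.2 := by
      rw [hisubdef]
      have ht1 := M.tau1_comp
      have ht2 := M.tau2_comp
      have hu : Computable fun p : ℕ × ℕ × ℕ => p.1 := Computable.fst
      have hl : Computable fun p : ℕ × ℕ × ℕ => p.2.1 := Computable.fst.comp Computable.snd
      have hk : Computable fun p : ℕ × ℕ × ℕ => p.2.2 := Computable.snd.comp Computable.snd
      have harg : Computable fun p : ℕ × ℕ × ℕ =>
          ((M.tau1 p.1, M.tau1 p.2.1, p.2.2) : ℕ × ℕ × ℕ) :=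
        (ht1.comp hu).pair ((ht1.comp hl).pair hk)
      exact SCAux.isubTest_computable (haF.comp harg) (hbF.comp harg) (hcF.comp harg)
        (haq.comp (ht2.comp hu)) (hbq.comp (ht2.comp hu))
        (haq.comp (ht2.comp hl)) (hbq.comp (ht2.comp hl)) hk
    have hidisjc : Computable fun p : ℕ × ℕ × ℕ => idisj p.1 p.2.1 p.2.2 := by
      rw [hidisjdef]
      have ht1 := M.tau1_comp
      have ht2 := M.tau2_comp
      have hu : Computable fun p : ℕ × ℕ × ℕ => p.1 := Computable.fst
      have hl : Computable fun p : ℕ × ℕ × ℕ => p.2.1 := Computable.fst.comp Computable.snd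
      have hk : Computable fun p : ℕ × ℕ × ℕ => p.2.2 := Computable.snd.comp Computable.snd
      have harg : Computable fun p : ℕ × ℕ × ℕ =>
          ((M.tau1 p.1, M.tau1 p.2.1, p.2.2) : ℕ × ℕ × ℕ) :=
        (ht1.comp hu).pair ((ht1.comp hl).pair hk)
      exact SCAux.idisjTest_computable (haF.comp harg) (hbF.comp harg) (hcF.comp harg)
        (haq.comp (ht2.comp hu)) (hbq.comp (ht2.comp hu))
        (haq.comp (ht2.comp hl)) (hbq.comp (ht2.comp hl)) hk
    have hQBc0 : Computable fun w : ℕ × ℕ × ℕ =>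
        SCAux.QBdef M.elem M.bar isub idisj j₀ w.1 w.2.1 w.2.2 :=
      SCAux.QBdef_computable M.elem_comp M.bar_comp hisubc hidisjc j₀
    have hGc : Computable fun z : (ℕ × ℕ) × ℕ => G z.1 z.2 := by
      rw [hG]
      -- inner: y : ((ℕ × ℕ) × ℕ) × ℕ  ~ (z, j')
      have hqb2 : Computable₂ fun (y : ((ℕ × ℕ) × ℕ) × ℕ) (N : ℕ) =>
          SCAux.QBdef M.elem M.bar isub idisj j₀ y.2 y.1.1.2 N :=
        (hQBc0.comp ((Computable.snd.comp Computable.fst).pair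
          (((Computable.snd.comp (Computable.fst.comp
            (Computable.fst.comp Computable.fst)))).pair Computable.snd))).to₂
      have hinner : Computable fun y : ((ℕ × ℕ) × ℕ) × ℕ =>
          SCAux.exB (fun N => SCAux.QBdef M.elem M.bar isub idisj j₀ y.2 y.1.1.2 N) y.1.2 :=
        SCAux.exB_computable hqb2 (Computable.snd.comp Computable.fst)
      have hev : Computable fun y : ((ℕ × ℕ) × ℕ) × ℕ =>
          (Nat.Partrec.Code.evaln y.1.2 c₀ (Nat.pair y.1.1.1 y.2)).isSome := by
        have hpr : Computable fun y : ((ℕ × ℕ) × ℕ) × ℕ => Nat.pair y.1.1.1 y.2 :=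
          Primrec₂.natPair.to_comp.comp
            (Computable.fst.comp (Computable.fst.comp Computable.fst)) Computable.snd
        exact Primrec.option_isSome.to_comp.comp (Nat.Partrec.Code.primrec_evaln.to_comp.comp
          (((Computable.snd.comp Computable.fst).pair (Computable.const c₀)).pair hpr))
      have hg : Computable₂ fun (z : (ℕ × ℕ) × ℕ) (j' : ℕ) =>
          ((Nat.Partrec.Code.evaln z.2 c₀ (Nat.pair z.1.1 j')).isSome
            && SCAux.exB (fun N => SCAux.QBdef M.elem M.bar isub idisj j₀ j' z.1.2 N) z.2) :=
        (Primrec.and.to_comp.comp hev hinner).to₂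
      exact SCAux.exB_computable hg Computable.snd
    exact (Computable.cond hGc (Computable.const (some 0)) (Computable.const Option.none)).to₂
  · intro p
    show (M.Ihat p.1 ∩ S' ⊆ M.J p.2) ↔ _
    rw [Nat.rfindOpt_dom, hS', M.char S hS.1 j₀ p.1 p.2]
    have hpenc : ∀ j' : ℕ, Encodable.encode ((p.1, j') : ℕ × ℕ) = Nat.pair p.1 j' := by
      intro j'; rfl
    constructor
    · rintro ⟨j', hj'cov, hgood⟩
      obtain ⟨s, hs⟩ := (hc₀ (p.1, j')).1 hj'cov
      obtain ⟨N, hN⟩ := (hQB j' p.2).2 ((hPbridge j' p.2).2 hgood)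
      set n : ℕ := max (j' + 1) (max s (N + 1)) with hn
      refine ⟨n, 0, ?_⟩
      have hGt : G p n = true := by
        rw [hG]
        refine SCAux.exB_iff.2 ⟨j', by omega, ?_⟩
        rw [Bool.and_eq_true]
        constructor
        · obtain ⟨a, ha⟩ := Option.isSome_iff_exists.1 (by rw [hpenc] at hs; exact hs)
          exact Option.isSome_iff_exists.2
            ⟨a, Nat.Partrec.Code.evaln_mono (by omega) ha⟩
        · exact SCAux.exB_iff.2 ⟨N, by omega, hN⟩
      rw [hGt]
      simp
    · rintro ⟨n, a, ha⟩
      have hGn : G p n = true := by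
        by_contra hGn
        rw [Bool.not_eq_true] at hGn
        rw [hGn] at ha
        simp at ha
      rw [hG] at hGn
      obtain ⟨j', -, hj'⟩ := SCAux.exB_iff.1 hGn
      rw [Bool.and_eq_true] at hj'
      obtain ⟨h1, h2⟩ := hj'
      obtain ⟨N, -, hN⟩ := SCAux.exB_iff.1 h2
      exact ⟨j', (hc₀ (p.1, j')).2 ⟨n, by rw [hpenc]; exact h1⟩,
        (hPbridge _ _).1 ((hQB _ _).1 ⟨N, hN⟩)⟩
end

section
/- Let (X,d,α) be a computable metric space and let A, B be disjoint nonempty compact sets in (X,d). Then: (i) for each ε > 0 there exists j ∈ ℕ such that A ⊆_ε J_j; (ii) there exists μ > 0 such that for all i,j ∈ ℕ, if A ⊆_μ J_i and B ⊆_μ J_j, then J_i ◊ J_j. -/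
open Metric Set

lemma CMS.subEps_exists {X : Type*} [MetricSpace X] (M : CMS X) (K : Set X)
    (hKne : K.Nonempty) (hK : IsCompact K) (ε : ℝ) (hε : 0 < ε) :
    ∃ j : ℕ, M.SubEps K ε j := by
  set S : Set ℕ := {i | M.rho i < ε ∧ (M.I i ∩ K).Nonempty} with hS
  have hcov : K ⊆ ⋃ i ∈ S, M.I i := by
    intro x hx
    obtain ⟨r, hr0, hrε⟩ := exists_rat_btwn hε
    have hr0' : (0 : ℚ) < r := by exact_mod_cast hr0
    obtain ⟨n, hn⟩ := M.dense_alpha.exists_dist_lt x (show (0:ℝ) < (r:ℝ) by exact_mod_cast hr0)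
    obtain ⟨k, hk⟩ := M.q_surj r hr0'
    obtain ⟨i, hi1, hi2⟩ := M.tau_surj n k
    have hρ : M.rho i = (r : ℝ) := by simp [CMS.rho, hi2, hk]
    have hxI : x ∈ M.I i := by
      simp only [CMS.I, CMS.lam, hi1, Metric.mem_ball, hρ]
      exact hn
    refine Set.mem_biUnion (show i ∈ S from ⟨by rw [hρ]; exact hrε, ⟨x, hxI, hx⟩⟩) hxI
  obtain ⟨T, hTS, hTfin, hTcov⟩ := hK.elim_finite_subcover_image
    (fun i (_ : i ∈ S) => Metric.isOpen_ball) hcov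
  have hTne : T.Nonempty := by
    obtain ⟨x, hx⟩ := hKne
    obtain ⟨i, hi, _⟩ := Set.mem_iUnion₂.1 (hTcov hx)
    exact ⟨i, hi⟩
  set t : Finset ℕ := hTfin.toFinset with ht
  have hLne : t.toList ≠ [] := by
    simp [Finset.toList_eq_nil]
    exact Finset.nonempty_iff_ne_empty.1 (by simpa [ht] using hTne)
  obtain ⟨j, hj⟩ := M.seq_surj t.toList hLne
  have hidx : ∀ i, i ∈ M.idx j ↔ i ∈ T := by
    intro i
    constructor
    · intro hi
      simp only [CMS.idx, Finset.mem_image, Finset.mem_range] at hi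
      obtain ⟨m, hm, hmi⟩ := hi
      have : i ∈ t.toList := by
        rw [← hj]
        exact List.mem_map.2 ⟨m, List.mem_range.2 hm, hmi⟩
      simpa [ht] using Finset.mem_toList.1 this
    · intro hi
      have : i ∈ t.toList := Finset.mem_toList.2 (by simpa [ht] using hi)
      rw [← hj] at this
      obtain ⟨m, hm, hmi⟩ := List.mem_map.1 this
      exact Finset.mem_image.2 ⟨m, Finset.mem_range.2 (List.mem_range.1 hm), hmi⟩
  refine ⟨j, ?_, ?_, ?_⟩
  · intro x hx
    obtain ⟨i, hi, hxi⟩ := Set.mem_iUnion₂.1 (hTcov hx)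
    exact Set.mem_biUnion ((hidx i).2 hi) hxi
  · intro i hi
    exact (hTS ((hidx i).1 hi)).2
  · intro i hi
    exact (hTS ((hidx i).1 hi)).1

/-- For disjoint nonempty compact `A, B`: (i) for each `ε > 0` there is
`j` with `A ⊆_ε J_j`; (ii) there is `μ > 0` such that `A ⊆_μ J_i` and `B ⊆_μ J_j`
imply `J_i ◊ J_j`. -/
theorem separator_lemma {X : Type*} [MetricSpace X] (M : CMS X) (A B : Set X)
    (hAB : Disjoint A B) (hAne : A.Nonempty) (hBne : B.Nonempty)
    (hA : IsCompact A) (hB : IsCompact B) :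
    (∀ ε : ℝ, 0 < ε → ∃ j : ℕ, M.SubEps A ε j) ∧
      ∃ μ : ℝ, 0 < μ ∧ ∀ i j : ℕ, M.SubEps A μ i → M.SubEps B μ j → M.JDisj i j := by
  refine ⟨fun ε hε => M.subEps_exists A hAne hA ε hε, ?_⟩
  obtain ⟨⟨a₀, b₀⟩, hab, hmin⟩ := (hA.prod hB).exists_isMinOn (hAne.prod hBne)
    (continuous_dist.continuousOn)
  set δ : ℝ := dist a₀ b₀ with hδ
  have hδpos : 0 < δ := by
    rw [hδ, dist_pos]
    intro h
    exact Set.disjoint_left.1 hAB hab.1 (h ▸ hab.2)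
  have hδle : ∀ a ∈ A, ∀ b ∈ B, δ ≤ dist a b := fun a ha b hb => hmin (show ((a,b):X×X) ∈ A ×ˢ B from ⟨ha, hb⟩)
  refine ⟨δ / 4, by linarith, fun i j hAi hBj => ?_⟩
  intro k hk l hl
  obtain ⟨a, haI, haA⟩ := hAi.2.1 k hk
  obtain ⟨b, hbI, hbB⟩ := hBj.2.1 l hl
  have hρk : M.rho k < δ / 4 := hAi.2.2 k hk
  have hρl : M.rho l < δ / 4 := hBj.2.2 l hl
  have hak : dist a (M.lam k) < M.rho k := by simpa [CMS.I, Metric.mem_ball, dist_comm] using haI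
  have hbl : dist b (M.lam l) < M.rho l := by simpa [CMS.I, Metric.mem_ball, dist_comm] using hbI
  have hab' : δ ≤ dist a b := hδle a haA b hbB
  have htri : dist a b ≤ dist a (M.lam k) + dist (M.lam k) (M.lam l) + dist (M.lam l) b :=
    dist_triangle4 a (M.lam k) (M.lam l) b
  have : dist b (M.lam l) = dist (M.lam l) b := dist_comm _ _
  unfold CMS.IDisj
  linarith
end

section
/- Let (X,d,α) be a computable metric space, let A ⊆ ℕ be a c.e. set, and let K be a nonempty compact set in X such that K ⊆ ⋃_{i∈A} I_i. Then there exists μ > 0 such that for all j ∈ ℕ, if K ⊆_μ J_j, then for every u ∈ [j] there exists v ∈ A with I_u ⊑ I_v. -/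
open Metric Set

/-- If `K` is a nonempty compact set covered by c.e.-many rational
balls `I_i, i ∈ A`, then for some `μ > 0`, `K ⊆_μ J_j` implies that every `I_u`,
`u ∈ [j]`, is formally contained in some `I_v`, `v ∈ A`. -/
theorem augmentation_lemma {X : Type*} [MetricSpace X] (M : CMS X)
    (A : Set ℕ) (hA : CEset A) (K : Set X) (hKne : K.Nonempty) (hK : IsCompact K)
    (hcov : K ⊆ ⋃ i ∈ A, M.I i) :
    ∃ μ : ℝ, 0 < μ ∧ ∀ j : ℕ, M.SubEps K μ j →
      ∀ u ∈ M.idx j, ∃ v ∈ A, M.ISubF u v := by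
  have h1 : ∀ x : X, x ∈ K → ∃ δ : ℝ, 0 < δ ∧ ∃ v ∈ A,
      dist x (M.lam v) + 4 * δ ≤ M.rho v := by
    intro x hx
    obtain ⟨v, hvA, hxv⟩ := Set.mem_iUnion₂.mp (hcov hx)
    rw [CMS.I, Metric.mem_ball] at hxv
    refine ⟨(M.rho v - dist x (M.lam v)) / 4, by linarith, v, hvA, by linarith⟩
  choose! δ hδpos hv using h1
  obtain ⟨t, hcov'⟩ := hK.elim_nhds_subcover' (fun x hx => Metric.ball x (δ x))
    (fun x hx => Metric.ball_mem_nhds _ (hδpos x hx))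
  have htne : t.Nonempty := by
    rcases hKne with ⟨x, hx⟩
    rcases Set.mem_iUnion₂.mp (hcov' hx) with ⟨p, hp, _⟩
    exact ⟨p, hp⟩
  refine ⟨t.inf' htne (fun p => δ (p : X)), ?_, ?_⟩
  · exact (Finset.lt_inf'_iff _).mpr fun p hp => hδpos _ p.2
  · rintro j ⟨hKJ, hmeet, hrad⟩ u hu
    obtain ⟨x, hxI, hxK⟩ := hmeet u hu
    rcases Set.mem_iUnion₂.mp (hcov' hxK) with ⟨p, hpt, hxp⟩
    obtain ⟨w, hwA, hw⟩ := hv (p : X) p.2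
    refine ⟨w, hwA, ?_⟩
    have hμp : t.inf' htne (fun p => δ (p : X)) ≤ δ (p : X) :=
      Finset.inf'_le _ hpt
    have hρu : M.rho u < δ (p : X) := lt_of_lt_of_le (hrad u hu) hμp
    have hxu : dist x (M.lam u) < M.rho u := Metric.mem_ball.mp hxI
    have hxp' : dist x (p : X) < δ (p : X) := Metric.mem_ball.mp hxp
    have htri : dist (M.lam u) (M.lam w) ≤
        dist (M.lam u) x + dist x (p : X) + dist (p : X) (M.lam w) :=
      dist_triangle4 _ _ _ _
    rw [CMS.ISubF]
    rw [dist_comm] at hxu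
    linarith [hδpos (p : X) p.2]
end

section
/- Let (X,d,α) be a computable metric space, let K be a nonempty compact set in X and let a ∈ ℕ be such that K ⊆ J_a. Then there exists μ > 0 such that for all j ∈ ℕ, if K ⊆_μ J_j, then J_j ⊑ J_a. -/
open Metric Set

/-- If `K` is nonempty compact with `K ⊆ J_a`, then for some `μ > 0`,
`K ⊆_μ J_j` implies `J_j ⊑ J_a`. -/
theorem augmentation_lemma_J {X : Type*} [MetricSpace X] (M : CMS X)
    (K : Set X) (hKne : K.Nonempty) (hK : IsCompact K) (a : ℕ) (hKa : K ⊆ M.J a) :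
    ∃ μ : ℝ, 0 < μ ∧ ∀ j : ℕ, M.SubEps K μ j → M.JSubF j a := by
  set g : X → ℝ := fun x => (M.idx a).sup' (M.idx_nonempty a) (fun l => M.rho l - dist x (M.lam l))
    with hg
  have hgc : Continuous g :=
    Continuous.finset_sup'_apply (M.idx_nonempty a)
      fun l _ => continuous_const.sub (continuous_id.dist continuous_const)
  obtain ⟨x0, hx0K, hx0min⟩ := hK.exists_isMinOn hKne hgc.continuousOn
  have hδpos : 0 < g x0 := by
    obtain ⟨l, hl, hxl⟩ := by
      have := hKa hx0K
      simpa [CMS.J, CMS.I, Metric.mem_ball] using this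
    calc 0 < M.rho l - dist x0 (M.lam l) := by linarith
    _ ≤ g x0 := Finset.le_sup' (fun l => M.rho l - dist x0 (M.lam l)) hl
  refine ⟨g x0 / 3, by linarith, ?_⟩
  intro j ⟨hsub, hmeet, hrhosmall⟩
  intro k hk
  obtain ⟨x, hxI, hxK⟩ := hmeet k hk
  have hgx : g x0 ≤ g x := hx0min hxK
  obtain ⟨l, hl, hll⟩ := Finset.exists_mem_eq_sup' (M.idx_nonempty a)
    (fun l => M.rho l - dist x (M.lam l))
  refine ⟨l, hl, ?_⟩
  have h1 : g x0 ≤ M.rho l - dist x (M.lam l) := by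
    rw [← hll]; exact hgx
  have h2 : dist x (M.lam k) < M.rho k := by simpa [CMS.I, Metric.mem_ball] using hxI
  have h3 : M.rho k < g x0 / 3 := hrhosmall k hk
  have h4 : dist (M.lam k) (M.lam l) ≤ dist (M.lam k) x + dist x (M.lam l) := dist_triangle _ _ _
  have h5 : dist (M.lam k) x = dist x (M.lam k) := dist_comm _ _
  unfold CMS.ISubF
  linarith
end

section
/- Let (X,d,α) be a computable metric space, let n ≥ 1, let (K_0,…,K_{n+1}) be a quasi-chain of nonempty compact sets in X, and let A ⊆ ℕ be a finite set. Then for every ε > 0 there exist p,l,q ∈ ℕ with l̄ = n−1 such that: (a) K_0 ⊆_ε J_p, K_{n+1} ⊆_ε J_q, and K_i ⊆_ε J_{(l)_{i−1}} for all i ∈ {1,…,n}; (b) (J_p, J_{(l)_0},…,J_{(l)_{n−1}}, J_q) is a formal chain; (c) for all a ∈ A: if K_0 ⊆ J_a then J_p ⊑ J_a, if K_{n+1} ⊆ J_a then J_q ⊑ J_a, and for each i ∈ {1,…,n}, if K_i ⊆ J_a then J_{(l)_{i−1}} ⊑ J_a. -/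
open Metric Set

section InflationHelpers

variable {X : Type*} [MetricSpace X]

/-- Take a positive minimum over a finset of positive bounds. -/
lemma exists_pos_min_finset {ι : Type*} (s : Finset ι) (P : ι → ℝ → Prop)
    (hmono : ∀ i, ∀ δ δ' : ℝ, δ' ≤ δ → P i δ → P i δ') :
    (∀ i ∈ s, ∃ δ > 0, P i δ) → ∃ δ > 0, ∀ i ∈ s, P i δ := by
  classical
  induction s using Finset.induction_on with
  | empty => exact fun _ => ⟨1, one_pos, fun i hi => absurd hi (by simp)⟩
  | insert _ _ hx ih =>
    intro h
    obtain ⟨δ₁, hδ₁, hP₁⟩ := h _ (Finset.mem_insert_self _ _)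
    obtain ⟨δ₂, hδ₂, hP₂⟩ := ih fun i hi => h i (Finset.mem_insert_of_mem hi)
    refine ⟨min δ₁ δ₂, lt_min hδ₁ hδ₂, fun i hi => ?_⟩
    rcases Finset.mem_insert.1 hi with rfl | hi
    · exact hmono _ _ _ (min_le_left _ _) hP₁
    · exact hmono _ _ _ (min_le_right _ _) (hP₂ i hi)

/-- Positive distance between disjoint nonempty compact sets. -/
lemma compact_disjoint_dist {U V : Set X} (hU : IsCompact U) (hV : IsCompact V)
    (hUne : U.Nonempty) (hVne : V.Nonempty) (hdisj : U ∩ V = ∅) :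
    ∃ δ > 0, ∀ x ∈ U, ∀ y ∈ V, δ ≤ dist x y := by
  obtain ⟨x0, hx0, hmin⟩ := hU.exists_isMinOn hUne (continuous_infDist_pt V).continuousOn
  refine ⟨Metric.infDist x0 V, ?_, fun x hx y hy =>
    le_trans (hmin hx) (Metric.infDist_le_dist_of_mem hy)⟩
  rw [gt_iff_lt, ← (hV.isClosed.notMem_iff_infDist_pos hVne)]
  intro hmem
  exact absurd hdisj (Set.Nonempty.ne_empty ⟨x0, hx0, hmem⟩)

/-- Uniform margin for a compact subset of `J a`. -/
lemma margin_lemma (M : CMS X) (a : ℕ) (K : Set X) (hK : IsCompact K) (hne : K.Nonempty)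
    (hsub : K ⊆ M.J a) :
    ∃ η > 0, ∀ x ∈ K, ∃ m ∈ M.idx a, dist x (M.lam m) + η < M.rho m := by
  set f : X → ℝ := fun x => (M.idx a).sup' (M.idx_nonempty a) (fun m => M.rho m - dist x (M.lam m))
    with hf
  have hle : ∀ (x : X) (m : ℕ), m ∈ M.idx a → M.rho m - dist x (M.lam m) ≤ f x :=
    fun x m hm => Finset.le_sup' (fun m => M.rho m - dist x (M.lam m)) hm
  have key : ∀ x y : X, f x ≤ f y + dist x y := by
    intro x y
    have h3 : ∀ m ∈ M.idx a, M.rho m - dist x (M.lam m) ≤ f y + dist x y := by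
      intro m hm
      have h1 := hle y m hm
      have h2 := dist_triangle y x (M.lam m)
      rw [dist_comm y x] at h2
      linarith
    exact Finset.sup'_le _ _ h3
  have hlip : LipschitzWith 1 f := by
    refine LipschitzWith.of_dist_le_mul fun x y => ?_
    rw [NNReal.coe_one, one_mul, Real.dist_eq, abs_sub_le_iff]
    constructor
    · have := key x y; linarith
    · have := key y x; rw [dist_comm y x] at this; linarith
  obtain ⟨x0, hx0, hmin⟩ := hK.exists_isMinOn hne hlip.continuous.continuousOn
  have hfx0 : 0 < f x0 := by
    obtain ⟨m, hm, hxm⟩ := Set.mem_iUnion₂.1 (hsub hx0)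
    have h1 : M.rho m - dist x0 (M.lam m) ≤ f x0 := hle x0 m hm
    have hxm' : dist x0 (M.lam m) < M.rho m := Metric.mem_ball.1 hxm
    linarith
  refine ⟨f x0 / 2, by linarith, fun x hx => ?_⟩
  obtain ⟨m, hm, hfm⟩ := Finset.exists_mem_eq_sup' (M.idx_nonempty a)
    (fun m => M.rho m - dist x (M.lam m))
  refine ⟨m, hm, ?_⟩
  have h1 : f x0 ≤ f x := hmin hx
  have h2 : f x = M.rho m - dist x (M.lam m) := by rw [hf]; exact hfm
  linarith

/-- Cover a nonempty compact set with rational balls of fixed rational radius `r`,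
with centers `r/2`-close to the set. -/
lemma cover_lemma (M : CMS X) (K : Set X) (hK : IsCompact K) (hne : K.Nonempty)
    (r : ℚ) (hr : 0 < r) :
    ∃ j : ℕ, K ⊆ M.J j ∧
      ∀ i ∈ M.idx j, M.rho i = (r : ℝ) ∧ ∃ x ∈ K, dist (M.lam i) x < (r : ℝ) / 2 := by
  obtain ⟨w, hw⟩ := M.q_surj r hr
  have hrR : (0 : ℝ) < (r : ℝ) := by exact_mod_cast hr
  have hpick : ∀ x : X, ∃ i : ℕ, M.rho i = (r : ℝ) ∧ dist x (M.lam i) < (r : ℝ) / 2 := by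
    intro x
    obtain ⟨m, hm⟩ := M.dense_alpha.exists_dist_lt x (by linarith : (0:ℝ) < (r:ℝ)/2)
    obtain ⟨i, hi1, hi2⟩ := M.tau_surj m w
    refine ⟨i, ?_, ?_⟩
    · simp [CMS.rho, hi2, hw]
    · simpa [CMS.lam, hi1] using hm
  choose g hg1 hg2 using hpick
  have hcov : K ⊆ ⋃ x : K, Metric.ball (x : X) ((r : ℝ) / 2) := fun y hy =>
    Set.mem_iUnion.2 ⟨⟨y, hy⟩, Metric.mem_ball_self (by linarith)⟩
  obtain ⟨t, ht⟩ := hK.elim_finite_subcover (fun x : K => Metric.ball (x : X) ((r : ℝ) / 2))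
    (fun _ => Metric.isOpen_ball) hcov
  have htne : t.Nonempty := by
    obtain ⟨y, hy⟩ := hne
    obtain ⟨x, hx, -⟩ := Set.mem_iUnion₂.1 (ht hy)
    exact ⟨x, hx⟩
  set L : List ℕ := t.toList.map (fun x : ↥K => g (x : X)) with hL
  have hLlen : L.length = t.card := by rw [hL]; simp
  have hLne : L ≠ [] := List.ne_nil_of_length_pos (by rw [hLlen]; exact htne.card_pos)
  obtain ⟨j, hj⟩ := M.seq_surj L hLne
  have hmemL : ∀ i, i ∈ M.idx j ↔ i ∈ L := by
    intro i
    simp only [CMS.idx, Finset.mem_image, Finset.mem_range, ← hj, List.mem_map,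
      List.mem_range]
  have hmem1 : ∀ x ∈ t, g (x : X) ∈ M.idx j := by
    intro x hx
    refine (hmemL _).2 ?_
    rw [hL]
    exact List.mem_map_of_mem (f := fun x : ↥K => g (x : X)) (Finset.mem_toList.2 hx)
  have hmem2 : ∀ i ∈ M.idx j, ∃ x ∈ t, g (x : X) = i := by
    intro i hi
    have : i ∈ L := (hmemL i).1 hi
    rw [hL] at this
    obtain ⟨x, hx, hxi⟩ := (List.mem_map (f := fun x : ↥K => g (x : X)) (l := t.toList)).1 this
    exact ⟨x, Finset.mem_toList.1 hx, hxi⟩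
  refine ⟨j, ?_, ?_⟩
  · intro y hy
    obtain ⟨x, hx, hyx⟩ := Set.mem_iUnion₂.1 (ht hy)
    have h1 : dist y (M.lam (g (x : X))) < (r : ℝ) := by
      have h0 := dist_triangle y (x : X) (M.lam (g (x : X)))
      have h2 := hg2 (x : X)
      have h3 : dist y (x : X) < (r : ℝ) / 2 := Metric.mem_ball.1 hyx
      linarith
    exact Set.mem_iUnion₂.2 ⟨g (x : X), hmem1 x hx,
      Metric.mem_ball.2 (by rw [hg1]; exact h1)⟩
  · intro i hi
    obtain ⟨x, hx, rfl⟩ := hmem2 i hi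
    exact ⟨hg1 _, ⟨(x : X), x.2, by rw [dist_comm]; exact hg2 _⟩⟩

end InflationHelpers

theorem inflation_lemma {X : Type*} [MetricSpace X] (M : CMS X)
    (n : ℕ) (hn : 1 ≤ n) (K : ℕ → Set X)
    (hqc : IsQuasiChainSeq K (n + 1)) (hcmp : ∀ i ≤ n + 1, IsCompact (K i))
    (A : Finset ℕ) :
    ∀ ε : ℝ, 0 < ε → ∃ p l q : ℕ, M.bar l = n - 1 ∧
      (M.SubEps (K 0) ε p ∧ M.SubEps (K (n + 1)) ε q ∧
        ∀ i : ℕ, 1 ≤ i → i ≤ n → M.SubEps (K i) ε (M.elem l (i - 1))) ∧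
      (∀ u ≤ n + 1, ∀ v ≤ n + 1, 1 < |(u : ℤ) - (v : ℤ)| →
        M.JDisj (if u = 0 then p else if u = n + 1 then q else M.elem l (u - 1))
          (if v = 0 then p else if v = n + 1 then q else M.elem l (v - 1))) ∧
      ∀ a ∈ A, (K 0 ⊆ M.J a → M.JSubF p a) ∧ (K (n + 1) ⊆ M.J a → M.JSubF q a) ∧
        ∀ i : ℕ, 1 ≤ i → i ≤ n → K i ⊆ M.J a → M.JSubF (M.elem l (i - 1)) a := by
  classical
  intro ε hε
  obtain ⟨hKne, hKdisj⟩ := hqc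
  -- uniform positive distance between non-adjacent links
  have hδex : ∃ δ > 0, ∀ u ≤ n+1, ∀ v ≤ n+1, 1 < |(u:ℤ) - (v:ℤ)| →
      ∀ x ∈ K u, ∀ y ∈ K v, δ ≤ dist x y := by
    obtain ⟨δ, hδ0, h⟩ := exists_pos_min_finset ((Finset.range (n+2)) ×ˢ (Finset.range (n+2)))
      (fun p δ => 1 < |(p.1:ℤ) - (p.2:ℤ)| → ∀ x ∈ K p.1, ∀ y ∈ K p.2, δ ≤ dist x y)
      (fun p δ δ' hle hP h' x hx y hy => le_trans hle (hP h' x hx y hy))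
      (by
        rintro ⟨u, v⟩ hp
        rw [Finset.mem_product, Finset.mem_range, Finset.mem_range] at hp
        by_cases hcond : 1 < |(u:ℤ) - (v:ℤ)|
        · have hdisj : K u ∩ K v = ∅ := by
            by_contra h
            exact absurd (hKdisj u (by omega) v (by omega)
              (Set.nonempty_iff_ne_empty.2 h)) (not_le.2 hcond)
          obtain ⟨δ, hδ, h⟩ := compact_disjoint_dist (hcmp u (by omega)) (hcmp v (by omega))
            (hKne u (by omega)) (hKne v (by omega)) hdisj
          exact ⟨δ, hδ, fun _ => h⟩
        · exact ⟨1, one_pos, fun h => absurd h hcond⟩)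
    exact ⟨δ, hδ0, fun u hu v hv h' => h (u,v)
      (by rw [Finset.mem_product, Finset.mem_range, Finset.mem_range]; omega) h'⟩
  obtain ⟨δ, hδ0, hδ⟩ := hδex
  -- uniform margin for inclusions K u ⊆ J a
  have hηex : ∃ η > 0, ∀ a ∈ A, ∀ u ≤ n+1, K u ⊆ M.J a → ∀ x ∈ K u,
      ∃ m ∈ M.idx a, dist x (M.lam m) + η < M.rho m := by
    obtain ⟨η, hη0, h⟩ := exists_pos_min_finset (A ×ˢ Finset.range (n+2))
      (fun p η => K p.2 ⊆ M.J p.1 → ∀ x ∈ K p.2, ∃ m ∈ M.idx p.1,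
        dist x (M.lam m) + η < M.rho m)
      (fun p δ δ' hle hP h' x hx => by
        obtain ⟨m, hm, hmx⟩ := hP h' x hx
        exact ⟨m, hm, by linarith⟩)
      (by
        rintro ⟨a, u⟩ hp
        rw [Finset.mem_product, Finset.mem_range] at hp
        by_cases hsub : K u ⊆ M.J a
        · obtain ⟨η, hη, h⟩ := margin_lemma M a (K u) (hcmp u (by omega))
            (hKne u (by omega)) hsub
          exact ⟨η, hη, fun _ => h⟩
        · exact ⟨1, one_pos, fun h => absurd h hsub⟩)
    exact ⟨η, hη0, fun a ha u hu hsub => h (a,u)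
      (by rw [Finset.mem_product, Finset.mem_range]; exact ⟨ha, by omega⟩) hsub⟩
  obtain ⟨η, hη0, hη⟩ := hηex
  -- choose a small rational radius
  obtain ⟨r, hr0, hrlt⟩ := exists_rat_btwn
    (lt_min hε (lt_min (by linarith : (0:ℝ) < δ/4) (by linarith : (0:ℝ) < η/2)))
  have hrε : (r:ℝ) < ε := lt_of_lt_of_le hrlt (min_le_left _ _)
  have hrδ : (r:ℝ) < δ/4 :=
    lt_of_lt_of_le hrlt (le_trans (min_le_right _ _) (min_le_left _ _))
  have hrη : (r:ℝ) < η/2 :=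
    lt_of_lt_of_le hrlt (le_trans (min_le_right _ _) (min_le_right _ _))
  have hrq : 0 < r := by exact_mod_cast hr0
  have hrR : (0:ℝ) < (r:ℝ) := hr0
  -- covers
  obtain ⟨p, hpcov, hpprop⟩ := cover_lemma M (K 0) (hcmp 0 (by omega)) (hKne 0 (by omega)) r hrq
  obtain ⟨q0, hqcov, hqprop⟩ := cover_lemma M (K (n+1)) (hcmp _ le_rfl) (hKne _ le_rfl) r hrq
  have hmidex : ∀ i : ℕ, ∃ j, 1 ≤ i → i ≤ n → K i ⊆ M.J j ∧
      ∀ m ∈ M.idx j, M.rho m = (r:ℝ) ∧ ∃ x ∈ K i, dist (M.lam m) x < (r:ℝ)/2 := by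
    intro i
    by_cases h : 1 ≤ i ∧ i ≤ n
    · obtain ⟨j, hj⟩ := cover_lemma M (K i) (hcmp i (by omega)) (hKne i (by omega)) r hrq
      exact ⟨j, fun _ _ => hj⟩
    · exact ⟨0, fun h1 h2 => absurd ⟨h1, h2⟩ h⟩
  choose f hf using hmidex
  -- build the middle list
  set L : List ℕ := (List.range n).map (fun k => f (k+1)) with hLdef
  have hLlen : L.length = n := by simp [hLdef]
  have hLne : L ≠ [] := List.ne_nil_of_length_pos (by rw [hLlen]; omega)
  obtain ⟨l, hl⟩ := M.seq_surj L hLne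
  have hlen : M.bar l + 1 = n := by
    have h := congrArg List.length hl
    simpa [hLlen] using h
  have hbar : M.bar l = n - 1 := by omega
  have helem : ∀ i : ℕ, 1 ≤ i → i ≤ n → M.elem l (i-1) = f i := by
    intro i h1 h2
    have hi1 : i - 1 < M.bar l + 1 := by omega
    have hi2 : i - 1 < n := by omega
    have h := congrArg (fun t : List ℕ => t[(i-1)]?) hl
    simp only [hLdef, List.getElem?_map, List.getElem?_range hi1, List.getElem?_range hi2,
      Option.map_some] at h
    have h' : M.elem l (i-1) = f (i-1+1) := Option.some.inj h
    rw [h']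
    congr 1
    omega
  -- unified description of the chosen covers
  have hball : ∀ u, u ≤ n+1 →
      (K u ⊆ M.J (if u = 0 then p else if u = n+1 then q0 else M.elem l (u-1))) ∧
      ∀ i ∈ M.idx (if u = 0 then p else if u = n+1 then q0 else M.elem l (u-1)),
        M.rho i = (r:ℝ) ∧ ∃ x ∈ K u, dist (M.lam i) x < (r:ℝ)/2 := by
    intro u hu
    rcases eq_or_ne u 0 with rfl | h0
    · rw [if_pos rfl]
      exact ⟨hpcov, hpprop⟩
    · rcases eq_or_ne u (n+1) with rfl | h1
      · rw [if_neg h0, if_pos rfl]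
        exact ⟨hqcov, hqprop⟩
      · rw [if_neg h0, if_neg h1]
        have h2 : 1 ≤ u := by omega
        have h3 : u ≤ n := by omega
        rw [helem u h2 h3]
        exact hf u h2 h3
  -- SubEps constructor
  have mkSub : ∀ (S : Set X) (j : ℕ), S ⊆ M.J j →
      (∀ i ∈ M.idx j, M.rho i = (r:ℝ) ∧ ∃ x ∈ S, dist (M.lam i) x < (r:ℝ)/2) →
      M.SubEps S ε j := by
    intro S j hcov hprop
    refine ⟨hcov, fun i hi => ?_, fun i hi => ?_⟩
    · obtain ⟨hrho, x, hx, hdx⟩ := hprop i hi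
      refine ⟨x, ?_, hx⟩
      show x ∈ Metric.ball (M.lam i) (M.rho i)
      rw [Metric.mem_ball, dist_comm, hrho]
      linarith
    · rw [(hprop i hi).1]
      exact hrε
  -- JSubF constructor
  have gen : ∀ u ≤ n+1, ∀ j : ℕ,
      (∀ i ∈ M.idx j, M.rho i = (r:ℝ) ∧ ∃ x ∈ K u, dist (M.lam i) x < (r:ℝ)/2) →
      ∀ a ∈ A, K u ⊆ M.J a → M.JSubF j a := by
    intro u hu j hprop a ha hsub k hk
    obtain ⟨hrk, x, hx, hdx⟩ := hprop k hk
    obtain ⟨m, hm, hmx⟩ := hη a ha u hu hsub x hx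
    refine ⟨m, hm, ?_⟩
    show dist (M.lam k) (M.lam m) + M.rho k < M.rho m
    have t1 := dist_triangle (M.lam k) x (M.lam m)
    rw [hrk]
    linarith
  refine ⟨p, l, q0, hbar, ⟨?_, ?_, ?_⟩, ?_, ?_⟩
  · exact mkSub _ p hpcov hpprop
  · exact mkSub _ q0 hqcov hqprop
  · intro i h1 h2
    rw [helem i h1 h2]
    exact mkSub _ (f i) (hf i h1 h2).1 (hf i h1 h2).2
  · -- formal disjointness
    intro u hu v hv huv k hk m hm
    obtain ⟨-, hU⟩ := hball u hu
    obtain ⟨-, hV⟩ := hball v hv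
    obtain ⟨hrk, x, hx, hdx⟩ := hU k hk
    obtain ⟨hrm, y, hy, hdy⟩ := hV m hm
    have hd := hδ u hu v hv huv x hx y hy
    show M.rho k + M.rho m < dist (M.lam k) (M.lam m)
    rw [hrk, hrm]
    have t1 := dist_triangle4 x (M.lam k) (M.lam m) y
    have hdx' : dist x (M.lam k) < (r:ℝ)/2 := by rw [dist_comm]; exact hdx
    have hdy' : dist (M.lam m) y < (r:ℝ)/2 := hdy
    linarith
  · -- formal containments
    intro a ha
    exact ⟨fun h => gen 0 (by omega) p hpprop a ha h,
           fun h => gen (n+1) le_rfl q0 hqprop a ha h,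
           fun i h1 h2 h => by
             rw [helem i h1 h2]
             exact gen i (by omega) (f i) (hf i h1 h2).2 a ha h⟩
end
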